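/- arXiv:1010.2795 — 6 statements merged into one kernel-verified Lean document; each statement's English description precedes it below -/
import Mathlib

section
/- Fix δ > 0, set I_δ = (δ, π/δ + δ), and define v_δ(s) = −ln( sin(δ(s−δ))/δ ) for s ∈ I_δ. Let w : [δ, π/δ + δ] × ℝ → ℝ be smooth, 2π-periodic in its second variable θ, and satisfy Δw ≥ e^{2w} everywhere (so the conformal metric e^{2w}(ds² + dθ²) on the closed cylinder [δ, π/δ+δ] × S¹ has Gauss curvature at most −1). Then w(s,θ) ≤ v_δ(s) for all s ∈ I_δ and all θ. -/
open Metric Set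

/-- Second derivative test at an interior local max. -/
lemma sndDerivTest {g g1 : ℝ → ℝ} {c : ℝ} (hmax : IsLocalMax g 0)
    (hg : ∀ᶠ t in nhds (0:ℝ), HasDerivAt g (g1 t) t) (hg1 : HasDerivAt g1 c 0) : c ≤ 0 := by
  by_contra hc
  push_neg at hc
  have h0 : g1 0 = 0 := hmax.hasDerivAt_eq_zero hg.self_of_nhds
  have hs := hasDerivAt_iff_tendsto_slope.mp hg1
  have hsl : ∀ᶠ t in nhdsWithin (0:ℝ) {(0:ℝ)}ᶜ, 0 < slope g1 0 t :=
    hs.eventually (eventually_gt_nhds hc)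
  have hmono : nhdsWithin (0:ℝ) (Ioi 0) ≤ nhdsWithin (0:ℝ) {(0:ℝ)}ᶜ :=
    nhdsWithin_mono 0 (fun x hx => ne_of_gt hx)
  have hpos : ∀ᶠ t in nhdsWithin (0:ℝ) (Ioi 0), 0 < g1 t := by
    filter_upwards [hsl.filter_mono hmono, self_mem_nhdsWithin] with t ht ht'
    have hslope : slope g1 0 t = g1 t / t := by
      simp [slope_def_field, h0]
    rw [hslope] at ht
    have htpos : (0:ℝ) < t := ht'
    have := mul_pos ht htpos
    rwa [div_mul_cancel₀ _ (ne_of_gt htpos)] at this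
  obtain ⟨ε1, hε1, hIoo⟩ := mem_nhdsGT_iff_exists_Ioo_subset.mp hpos
  have hε1' : (0:ℝ) < ε1 := hε1
  obtain ⟨ε2, hε2, hball⟩ := Metric.eventually_nhds_iff.mp (hg.and hmax)
  set r := min (ε1/2) (ε2/2) with hr
  have hrpos : 0 < r := lt_min (by linarith) (by linarith)
  have hrball : ∀ t ∈ Icc (0:ℝ) r, HasDerivAt g (g1 t) t ∧ g t ≤ g 0 := by
    intro t ht
    apply hball
    rw [Real.dist_eq, sub_zero, abs_of_nonneg ht.1]
    calc t ≤ r := ht.2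
    _ ≤ ε2/2 := min_le_right _ _
    _ < ε2 := by linarith
  have hmono2 : StrictMonoOn g (Icc (0:ℝ) r) := by
    apply strictMonoOn_of_deriv_pos (convex_Icc _ _)
    · intro t ht
      exact ((hrball t ht).1.differentiableAt.continuousAt).continuousWithinAt
    · intro t ht
      rw [interior_Icc] at ht
      rw [(hrball t ⟨ht.1.le, ht.2.le⟩).1.deriv]
      apply hIoo
      constructor
      · exact ht.1
      · calc t < r := ht.2
        _ ≤ ε1/2 := min_le_left _ _
        _ < ε1 := by linarith
  have h1 := hmono2 (by constructor <;> [rfl; exact hrpos.le] : (0:ℝ) ∈ Icc (0:ℝ) r)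
      (by constructor <;> [exact hrpos.le; rfl] : r ∈ Icc (0:ℝ) r) hrpos
  have h2 := (hrball r ⟨hrpos.le, le_refl r⟩).2
  linarith

/-- Second directional derivative along a line, for a function smooth on an open set. -/
lemma lineSecondDeriv {w : ℝ × ℝ → ℝ} {O : Set (ℝ × ℝ)} (hO : IsOpen O)
    (hw : ContDiffOn ℝ (⊤ : ℕ∞) w O) {q e : ℝ × ℝ} (hq : q ∈ O) {ℓ : ℝ → ℝ × ℝ}
    (hℓ : ∀ t, HasDerivAt ℓ e t) (hℓ0 : ℓ 0 = q) :
    (∀ t : ℝ, ℓ t ∈ O → HasDerivAt (fun t => w (ℓ t)) (fderiv ℝ w (ℓ t) e) t)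
    ∧ HasDerivAt (fun t => fderiv ℝ w (ℓ t) e) (fderiv ℝ (fderiv ℝ w) q e e) 0 := by
  have hmem : O ∈ nhds q := hO.mem_nhds hq
  constructor
  · intro t hmemt
    have hca : ContDiffAt ℝ (⊤ : ℕ∞) w (ℓ t) := hw.contDiffAt (hO.mem_nhds hmemt)
    have hdiff : DifferentiableAt ℝ w (ℓ t) := hca.differentiableAt (by simp)
    exact hdiff.hasFDerivAt.comp_hasDerivAt t (hℓ t)
  · have hca : ContDiffAt ℝ (⊤ : ℕ∞) w q := hw.contDiffAt hmem
    have hF1 : ContDiffAt ℝ 1 (fderiv ℝ w) q := hca.fderiv_right ((by exact WithTop.coe_le_coe.mpr le_top))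
    have hFd : DifferentiableAt ℝ (fderiv ℝ w) q := hF1.differentiableAt one_ne_zero
    have happ : HasFDerivAt (fun x => fderiv ℝ w x e)
        ((ContinuousLinearMap.apply ℝ ℝ e).comp (fderiv ℝ (fderiv ℝ w) q)) q :=
      (ContinuousLinearMap.apply ℝ ℝ e).hasFDerivAt.comp q hFd.hasFDerivAt
    rw [← hℓ0] at happ
    have := happ.comp_hasDerivAt 0 (hℓ 0)
    rw [hℓ0] at this
    simpa [Function.comp_def] using this

lemma hasDerivAt_Vhyp {δ : ℝ} (hδ : 0 < δ) {s : ℝ} (hsin : Real.sin (δ*(s-δ)) ≠ 0) :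
    HasDerivAt (fun s => -Real.log (Real.sin (δ*(s-δ))/δ))
      (-(δ * Real.cos (δ*(s-δ)) / Real.sin (δ*(s-δ)))) s := by
  have hf : HasDerivAt (fun s => δ*(s-δ)) δ s := by
    simpa using ((hasDerivAt_id s).sub_const δ).const_mul δ
  have hsinD : HasDerivAt (fun s => Real.sin (δ*(s-δ))) (Real.cos (δ*(s-δ)) * δ) s :=
    (Real.hasDerivAt_sin _).comp s hf
  have hdiv : HasDerivAt (fun s => Real.sin (δ*(s-δ))/δ) (Real.cos (δ*(s-δ)) * δ / δ) s :=
    hsinD.div_const δ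
  have hne : Real.sin (δ*(s-δ))/δ ≠ 0 := div_ne_zero hsin (ne_of_gt hδ)
  have hlog := (hdiv.log hne).neg
  convert hlog using 1
  · rfl
  · rfl
  · rfl
  field_simp

lemma hasDerivAt_Vhyp1 {δ : ℝ} (hδ : 0 < δ) {s : ℝ} (hsin : Real.sin (δ*(s-δ)) ≠ 0) :
    HasDerivAt (fun s => -(δ * Real.cos (δ*(s-δ)) / Real.sin (δ*(s-δ))))
      (δ^2 / (Real.sin (δ*(s-δ)))^2) s := by
  have hf : HasDerivAt (fun s => δ*(s-δ)) δ s := by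
    simpa using ((hasDerivAt_id s).sub_const δ).const_mul δ
  have hsinD : HasDerivAt (fun s => Real.sin (δ*(s-δ))) (Real.cos (δ*(s-δ)) * δ) s :=
    (Real.hasDerivAt_sin _).comp s hf
  have hcosD : HasDerivAt (fun s => δ * Real.cos (δ*(s-δ))) (δ * (-Real.sin (δ*(s-δ)) * δ)) s :=
    ((Real.hasDerivAt_cos _).comp s hf).const_mul δ
  have hdiv := (hcosD.div hsinD hsin).neg
  convert hdiv using 1
  · rfl
  · rfl
  · rfl
  have pyth := Real.sin_sq_add_cos_sq (δ*(s-δ))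
  field_simp
  nlinarith [pyth]

lemma Vhyp2_eq {δ : ℝ} (hδ : 0 < δ) {s : ℝ} (hsin : 0 < Real.sin (δ*(s-δ))) :
    δ^2 / (Real.sin (δ*(s-δ)))^2 = Real.exp (2 * (-Real.log (Real.sin (δ*(s-δ))/δ))) := by
  set x := Real.sin (δ*(s-δ))/δ with hx
  have hxpos : 0 < x := div_pos hsin hδ
  have h2 : (2:ℝ) * (-Real.log x) = Real.log (x ^ (-2:ℤ)) := by
    rw [Real.log_zpow]; push_cast; ring
  rw [h2, Real.exp_log (by positivity)]
  rw [zpow_neg, zpow_two]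
  rw [hx]
  field_simp

/-- The flat Laplacian `∂²w/∂s² + ∂²w/∂θ²` of `w : ℝ × ℝ → ℝ` at `p`. -/
noncomputable def lap2 (w : ℝ × ℝ → ℝ) (p : ℝ × ℝ) : ℝ :=
  iteratedFDeriv ℝ 2 w p ![((1:ℝ),(0:ℝ)), ((1:ℝ),(0:ℝ))]
    + iteratedFDeriv ℝ 2 w p ![((0:ℝ),(1:ℝ)), ((0:ℝ),(1:ℝ))]

/-- any smooth `2π`-periodic conformal factor `w` on the closed cylinder
`[δ, π/δ+δ] × S¹` with Gauss curvature at most `-1` (`Δw ≥ e^{2w}`) lies below the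
hyperbolic conformal factor `v_δ(s) = -ln(sin(δ(s-δ))/δ)` on `I_δ = (δ, π/δ+δ)`. -/
theorem stmt2 (δ : ℝ) (hδ : 0 < δ) (w : ℝ × ℝ → ℝ)
    (hw : ContDiffOn ℝ (⊤ : ℕ∞) w (Icc δ (Real.pi/δ + δ) ×ˢ (univ : Set ℝ)))
    (hper : ∀ s θ : ℝ, w (s, θ + 2*Real.pi) = w (s, θ))
    (hK : ∀ p ∈ Icc δ (Real.pi/δ + δ) ×ˢ (univ : Set ℝ), Real.exp (2 * w p) ≤ lap2 w p) :
    ∀ s ∈ Ioo δ (Real.pi/δ + δ), ∀ θ : ℝ,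
      w (s, θ) ≤ -Real.log (Real.sin (δ * (s - δ)) / δ) := by
  have hπ := Real.pi_pos
  set b := Real.pi/δ + δ with hbdef
  have hπδ : 0 < Real.pi/δ := div_pos hπ hδ
  have hδb : δ < b := by rw [hbdef]; linarith
  set V : ℝ → ℝ := fun s => -Real.log (Real.sin (δ*(s-δ))/δ) with hVdef
  set V1 : ℝ → ℝ := fun s => -(δ * Real.cos (δ*(s-δ)) / Real.sin (δ*(s-δ))) with hV1def
  set V2 : ℝ → ℝ := fun s => δ^2 / (Real.sin (δ*(s-δ)))^2 with hV2def
  have hπeq : δ * (b - δ) = Real.pi := by rw [hbdef]; field_simp; ring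
  have hsinpos : ∀ s, δ < s → s < b → 0 < Real.sin (δ*(s-δ)) := by
    intro s h1 h2
    apply Real.sin_pos_of_pos_of_lt_pi
    · nlinarith
    · nlinarith
  -- bound on w
  have hK0 : IsCompact (Icc δ b ×ˢ Icc 0 (2*Real.pi)) := isCompact_Icc.prod isCompact_Icc
  have hcont0 : ContinuousOn w (Icc δ b ×ˢ Icc 0 (2*Real.pi)) :=
    (hw.continuousOn).mono (prod_mono_right (subset_univ _))
  obtain ⟨C, hC⟩ := hK0.exists_bound_of_continuousOn hcont0
  have h2π : 0 < 2*Real.pi := by linarith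
  have hper' : ∀ s, Function.Periodic (fun θ => w (s, θ)) (2*Real.pi) := fun s θ => hper s θ
  have hwle : ∀ s, s ∈ Icc δ b → ∀ θ : ℝ, w (s, θ) ≤ C := by
    intro s hsm θ
    obtain ⟨θ', hθ', he⟩ := (hper' s).exists_mem_Ico₀ h2π θ
    have he' : w (s, θ) = w (s, θ') := he
    rw [he']
    exact le_trans (le_abs_self _)
      (by simpa [Real.norm_eq_abs] using hC (s,θ') ⟨hsm, hθ'.1, hθ'.2.le⟩)
  set η := min (Real.exp (-(C+1))) (Real.pi/(4*δ)) with hηdef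
  have hηpos : 0 < η := lt_min (Real.exp_pos _) (by positivity)
  have hη1 : η ≤ Real.exp (-(C+1)) := min_le_left _ _
  have hη2 : η ≤ Real.pi/(4*δ) := min_le_right _ _
  set a' := δ + η with ha'def
  set b' := b - η with hb'def
  have hq4 : 4*(Real.pi/(4*δ)) = Real.pi/δ := by field_simp
  have ha'b' : a' < b' := by
    rw [ha'def, hb'def, hbdef]; linarith
  have hδa' : δ < a' := by rw [ha'def]; linarith
  have hb'b : b' < b := by rw [hb'def]; linarith
  -- boundary estimate
  have hside : ∀ s, δ < s → s < b → (s ≤ a' ∨ b' ≤ s) → C + 1 ≤ V s := by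
    intro s h1 h2 hcase
    have hsin := hsinpos s h1 h2
    have hsle : Real.sin (δ*(s-δ)) ≤ δ*η := by
      rcases hcase with h | h
      · calc Real.sin (δ*(s-δ)) ≤ δ*(s-δ) := Real.sin_le (by nlinarith)
        _ ≤ δ*η := by rw [ha'def] at h; nlinarith
      · calc Real.sin (δ*(s-δ)) = Real.sin (Real.pi - δ*(s-δ)) := (Real.sin_pi_sub _).symm
        _ ≤ Real.pi - δ*(s-δ) := Real.sin_le (by nlinarith)
        _ ≤ δ*η := by rw [hb'def] at h; nlinarith
    have hdiv : Real.sin (δ*(s-δ))/δ ≤ η := by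
      rw [div_le_iff₀ hδ]; nlinarith
    have hlog : Real.log (Real.sin (δ*(s-δ))/δ) ≤ -(C+1) := by
      calc Real.log (Real.sin (δ*(s-δ))/δ) ≤ Real.log η :=
            Real.log_le_log (div_pos hsin hδ) hdiv
      _ ≤ Real.log (Real.exp (-(C+1))) := Real.log_le_log hηpos hη1
      _ = -(C+1) := Real.log_exp _
    have : V s = -Real.log (Real.sin (δ*(s-δ))/δ) := rfl
    rw [this]; linarith
  -- max over compact set
  set K := Icc a' b' ×ˢ Icc (0:ℝ) (2*Real.pi) with hKdef
  have hKc : IsCompact K := isCompact_Icc.prod isCompact_Icc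
  have hKne : K.Nonempty := ⟨(a', 0), ⟨⟨le_refl _, ha'b'.le⟩, ⟨le_refl _, h2π.le⟩⟩⟩
  set u : ℝ×ℝ → ℝ := fun p => w p - V p.1 with hudef
  have hIccsub : Icc a' b' ⊆ Icc δ b := Icc_subset_Icc hδa'.le hb'b.le
  have hucont : ContinuousOn u K := by
    apply ContinuousOn.sub
    · exact (hw.continuousOn).mono (fun p hp => ⟨hIccsub hp.1, trivial⟩)
    · intro p hp
      apply ContinuousAt.continuousWithinAt
      have hsp := hsinpos p.1 (lt_of_lt_of_le hδa' hp.1.1) (lt_of_le_of_lt hp.1.2 hb'b)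
      have hne : Real.sin (δ*(p.1-δ))/δ ≠ 0 := ne_of_gt (div_pos hsp hδ)
      have hinner : Continuous (fun p : ℝ×ℝ => Real.sin (δ*(p.1-δ))/δ) :=
        (Real.continuous_sin.comp (continuous_const.mul (continuous_fst.sub continuous_const))).div_const δ
      have hinnerAt : ContinuousAt (fun p : ℝ×ℝ => Real.sin (δ*(p.1-δ))/δ) p :=
        hinner.continuousAt
      have hlogc : ContinuousAt (fun p : ℝ×ℝ => Real.log (Real.sin (δ*(p.1-δ))/δ)) p :=
        ContinuousAt.comp (f := fun p : ℝ×ℝ => Real.sin (δ*(p.1-δ))/δ) (x := p)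
          (Real.continuousAt_log hne) hinnerAt
      exact hlogc.neg
  obtain ⟨q, hqK, hqmax⟩ := hKc.exists_isMaxOn hKne hucont
  have hqs : q.1 ∈ Icc a' b' := hqK.1
  have hmaxall : ∀ s', s' ∈ Icc a' b' → ∀ θ' : ℝ, u (s', θ') ≤ u q := by
    intro s' hs' θ'
    obtain ⟨θ'', hθ'', he⟩ := (hper' s').exists_mem_Ico₀ h2π θ'
    have he' : w (s', θ') = w (s', θ'') := he
    have heq : u (s', θ') = u (s', θ'') := by simp only [hudef]; rw [he']
    rw [heq]
    exact hqmax ⟨hs', ⟨hθ''.1, hθ''.2.le⟩⟩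
  have hwq : w q ≤ C := by
    have := hwle q.1 (hIccsub hqs) q.2
    simpa using this
  have huq : u q ≤ 0 := by
    by_contra hpos
    push_neg at hpos
    have hq1a : a' < q.1 := by
      rcases lt_or_eq_of_le hqs.1 with h | h
      · exact h
      · exfalso
        have hVa : C+1 ≤ V q.1 := hside q.1 (h ▸ hδa') (h ▸ (lt_trans ha'b' hb'b))
          (Or.inl h.symm.le)
        have huqe : u q = w q - V q.1 := rfl
        rw [huqe] at hpos; linarith
    have hq1b : q.1 < b' := by
      rcases lt_or_eq_of_le hqs.2 with h | h
      · exact h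
      · exfalso
        have hVa : C+1 ≤ V q.1 := hside q.1 (h ▸ (lt_trans hδa' ha'b')) (h ▸ hb'b)
          (Or.inr h.ge)
        have huqe : u q = w q - V q.1 := rfl
        rw [huqe] at hpos; linarith
    have hδq : δ < q.1 := lt_trans hδa' hq1a
    have hqb : q.1 < b := lt_trans hq1b hb'b
    have hO : IsOpen (Ioo δ b ×ˢ (univ : Set ℝ)) := isOpen_Ioo.prod isOpen_univ
    have hwO : ContDiffOn ℝ (⊤ : ℕ∞) w (Ioo δ b ×ˢ (univ : Set ℝ)) :=
      hw.mono (prod_mono_left Ioo_subset_Icc_self)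
    have hqO : q ∈ Ioo δ b ×ˢ (univ : Set ℝ) := ⟨⟨hδq, hqb⟩, trivial⟩
    have hsinq : 0 < Real.sin (δ*(q.1-δ)) := hsinpos q.1 hδq hqb
    -- s-direction
    have hℓ1 : ∀ t : ℝ, HasDerivAt (fun t => ((q.1 + t, q.2) : ℝ×ℝ)) ((1:ℝ),(0:ℝ)) t :=
      fun t => ((hasDerivAt_id t).const_add q.1).prodMk (hasDerivAt_const t q.2)
    have hℓ10 : ((q.1 + 0, q.2) : ℝ×ℝ) = q := by simp
    obtain ⟨hws1, hws2⟩ := lineSecondDeriv hO hwO hqO hℓ1 hℓ10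
    have hevt : ∀ᶠ t in nhds (0:ℝ), q.1 + t ∈ Ioo a' b' := by
      have hct : ContinuousAt (fun t : ℝ => q.1 + t) 0 :=
        (continuous_const.add continuous_id).continuousAt
      have h0m : q.1 + 0 ∈ Ioo a' b' := by simpa using (⟨hq1a, hq1b⟩ : q.1 ∈ Ioo a' b')
      exact hct.preimage_mem_nhds (isOpen_Ioo.mem_nhds h0m)
    set φ : ℝ → ℝ := fun t => w (q.1 + t, q.2) - V (q.1 + t) with hφdef
    have hφ0 : φ 0 = u q := by simp [hφdef, hudef]
    have hφmax : IsLocalMax φ 0 := by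
      filter_upwards [hevt] with t ht
      have := hmaxall (q.1 + t) (Ioo_subset_Icc_self ht) q.2
      rw [hφ0]
      exact this
    set φ1 : ℝ → ℝ := fun t => fderiv ℝ w (q.1 + t, q.2) ((1:ℝ),(0:ℝ)) - V1 (q.1 + t) with hφ1def
    have hφd : ∀ᶠ t in nhds (0:ℝ), HasDerivAt φ (φ1 t) t := by
      filter_upwards [hevt] with t ht
      have hOt : ((q.1 + t, q.2) : ℝ×ℝ) ∈ Ioo δ b ×ˢ (univ : Set ℝ) :=
        ⟨⟨lt_trans hδa' ht.1, lt_trans ht.2 hb'b⟩, trivial⟩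
      have h1 := hws1 t hOt
      have hsint : Real.sin (δ*((q.1+t)-δ)) ≠ 0 :=
        ne_of_gt (hsinpos _ (lt_trans hδa' ht.1) (lt_trans ht.2 hb'b))
      have h2 : HasDerivAt (fun t => V (q.1 + t)) (V1 (q.1+t)) t := by
        have := (hasDerivAt_Vhyp hδ hsint).comp t ((hasDerivAt_id t).const_add q.1)
        simpa [Function.comp_def] using this
      exact h1.sub h2
    have hφ1d : HasDerivAt φ1
        (fderiv ℝ (fderiv ℝ w) q ((1:ℝ),(0:ℝ)) ((1:ℝ),(0:ℝ)) - V2 q.1) 0 := by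
      apply HasDerivAt.sub
      · exact hws2
      · have hsq0 : Real.sin (δ*((q.1 + 0)-δ)) ≠ 0 := by
          rw [add_zero]; exact ne_of_gt hsinq
        have := (hasDerivAt_Vhyp1 hδ hsq0).comp 0 ((hasDerivAt_id 0).const_add q.1)
        simpa [Function.comp_def] using this
    have hA : fderiv ℝ (fderiv ℝ w) q ((1:ℝ),(0:ℝ)) ((1:ℝ),(0:ℝ)) - V2 q.1 ≤ 0 :=
      sndDerivTest hφmax hφd hφ1d
    -- θ-direction
    have hℓ2 : ∀ t : ℝ, HasDerivAt (fun t => ((q.1, q.2 + t) : ℝ×ℝ)) ((0:ℝ),(1:ℝ)) t :=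
      fun t => (hasDerivAt_const t q.1).prodMk ((hasDerivAt_id t).const_add q.2)
    have hℓ20 : ((q.1, q.2 + 0) : ℝ×ℝ) = q := by simp
    obtain ⟨hwt1, hwt2⟩ := lineSecondDeriv hO hwO hqO hℓ2 hℓ20
    set ψ : ℝ → ℝ := fun t => w (q.1, q.2 + t) with hψdef
    have hψmax : IsLocalMax ψ 0 := by
      apply Filter.Eventually.of_forall
      intro t
      have := hmaxall q.1 hqs (q.2 + t)
      have huu : u (q.1, q.2 + t) = w (q.1, q.2 + t) - V q.1 := rfl
      have huq2 : u q = w q - V q.1 := rfl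
      rw [huu, huq2] at this
      have hψ0 : ψ 0 = w q := by simp [hψdef]
      rw [hψ0]
      simp only [hψdef]
      linarith
    have hψd : ∀ᶠ t in nhds (0:ℝ), HasDerivAt ψ
        (fderiv ℝ w (q.1, q.2 + t) ((0:ℝ),(1:ℝ))) t := by
      apply Filter.Eventually.of_forall
      intro t
      exact hwt1 t ⟨⟨hδq, hqb⟩, trivial⟩
    have hB : fderiv ℝ (fderiv ℝ w) q ((0:ℝ),(1:ℝ)) ((0:ℝ),(1:ℝ)) ≤ 0 :=
      sndDerivTest hψmax hψd hwt2
    -- combine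
    have hlap : lap2 w q = fderiv ℝ (fderiv ℝ w) q ((1:ℝ),(0:ℝ)) ((1:ℝ),(0:ℝ))
        + fderiv ℝ (fderiv ℝ w) q ((0:ℝ),(1:ℝ)) ((0:ℝ),(1:ℝ)) := by
      rw [lap2, iteratedFDeriv_two_apply, iteratedFDeriv_two_apply]
      simp
    have hKq : Real.exp (2 * w q) ≤ lap2 w q := hK q ⟨hIccsub hqs, trivial⟩
    have hVq : V2 q.1 = Real.exp (2 * V q.1) := Vhyp2_eq hδ hsinq
    have hfin : Real.exp (2 * w q) ≤ Real.exp (2 * V q.1) := by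
      rw [← hVq]
      calc Real.exp (2 * w q) ≤ lap2 w q := hKq
      _ = _ := hlap
      _ ≤ V2 q.1 := by linarith
    have h2le := Real.exp_le_exp.mp hfin
    have hwqV : w q ≤ V q.1 := by linarith
    have huqe : u q = w q - V q.1 := rfl
    rw [huqe] at hpos; linarith
  -- conclusion
  intro s hs θ
  show w (s, θ) ≤ V s
  by_cases hcase : a' ≤ s ∧ s ≤ b'
  · have h1 := hmaxall s ⟨hcase.1, hcase.2⟩ θ
    have h2 : u (s, θ) = w (s, θ) - V s := rfl
    rw [h2] at h1
    linarith
  · rw [not_and_or] at hcase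
    push_neg at hcase
    have hVs : C + 1 ≤ V s := by
      apply hside s hs.1 hs.2
      rcases hcase with h | h
      · exact Or.inl h.le
      · exact Or.inr h.le
    have hws : w (s, θ) ≤ C := hwle s ⟨hs.1.le, hs.2.le⟩ θ
    linarith
end

section
/- Let ψ : ℝ → ℝ be smooth with ψ(s) = s for s ≤ −1, ψ(s) = 0 for s ≥ 1, and ψ'' ≤ 0. Let Ω ⊆ ℂ be open and let a : Ω → ℝ be smooth with Δa ≥ 0 and Δa ≤ M e^{2a} (i.e. the Gauss curvature of e^{2a}|dz|² lies in [−M, 0]). For k ∈ ℝ define u = ψ(a − k) + k. Then u is smooth on Ω and satisfies −e^{−2u}Δu ≥ −e² M pointwise; that is, the Gauss curvature of e^{2u}|dz|² is bounded below by −e²M, uniformly in k. -/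
open Complex Metric Set

/-- The flat Laplacian of `u : ℂ → ℝ` at `z`, i.e. `∂²u/∂x² + ∂²u/∂y²`. -/
noncomputable def lap (u : ℂ → ℝ) (z : ℂ) : ℝ :=
  iteratedFDeriv ℝ 2 u z ![1, 1] + iteratedFDeriv ℝ 2 u z ![Complex.I, Complex.I]

lemma iFD2_comp {φ : ℝ → ℝ} (hφ : ContDiff ℝ (⊤ : ℕ∞) φ) {a : ℂ → ℝ} {Ω : Set ℂ}
    (hΩ : IsOpen Ω) (ha : ContDiffOn ℝ (⊤ : ℕ∞) a Ω) {z : ℂ} (hz : z ∈ Ω) (v : ℂ) :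
    iteratedFDeriv ℝ 2 (fun w => φ (a w)) z ![v, v] =
      deriv (deriv φ) (a z) * (fderiv ℝ a z v * fderiv ℝ a z v) +
        deriv φ (a z) * iteratedFDeriv ℝ 2 a z ![v, v] := by
  have hmem : Ω ∈ nhds z := hΩ.mem_nhds hz
  have hφd : Differentiable ℝ φ := hφ.differentiable (by simp)
  have hphiI : ContDiff ℝ ((⊤ : ℕ∞) : WithTop ℕ∞) φ := hφ.of_le (by simp)
  have hφ'd : Differentiable ℝ (deriv φ) :=
    (contDiff_infty_iff_deriv.mp hphiI).2.differentiable (by simp)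
  have haca : ContDiffAt ℝ (⊤ : ℕ∞) a z := ha.contDiffAt hmem
  have hazd : DifferentiableAt ℝ a z := haca.differentiableAt (by simp)
  have hfd : DifferentiableAt ℝ (fderiv ℝ a) z :=
    (haca.fderiv_right (m := (⊤ : ℕ∞)) (by simp)).differentiableAt (by simp)
  have hFca : ContDiffAt ℝ (⊤ : ℕ∞) (fun w => φ (a w)) z := (hφ.contDiffAt).comp z haca
  have hFd : DifferentiableAt ℝ (fderiv ℝ (fun w => φ (a w))) z :=
    (hFca.fderiv_right (m := (⊤ : ℕ∞)) (by simp)).differentiableAt (by simp)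
  have hFeq : ∀ᶠ y in nhds z, fderiv ℝ (fun w => φ (a w)) y = deriv φ (a y) • fderiv ℝ a y := by
    filter_upwards [hmem] with y hy
    have hayd : DifferentiableAt ℝ a y := (ha.contDiffAt (hΩ.mem_nhds hy)).differentiableAt (by simp)
    exact ((hφd (a y)).hasDerivAt.comp_hasFDerivAt y hayd.hasFDerivAt).fderiv
  have hFeq' : (fun y => fderiv ℝ (fun w => φ (a w)) y v) =ᶠ[nhds z]
      (fun y => deriv φ (a y) * fderiv ℝ a y v) := by
    filter_upwards [hFeq] with y hy
    rw [hy]; simp [smul_eq_mul]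
  rw [iteratedFDeriv_two_apply, iteratedFDeriv_two_apply]
  simp only [Matrix.cons_val_zero, Matrix.cons_val_one, Matrix.head_cons]
  have key : ∀ (f : ℂ → ℝ), DifferentiableAt ℝ (fderiv ℝ f) z →
      fderiv ℝ (fun y => fderiv ℝ f y v) z = (fderiv ℝ (fderiv ℝ f) z).flip v := by
    intro f hf
    rw [fderiv_clm_apply hf (differentiableAt_const v)]
    simp
  have h1 : fderiv ℝ (fderiv ℝ (fun w => φ (a w))) z v v
      = fderiv ℝ (fun y => fderiv ℝ (fun w => φ (a w)) y v) z v := by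
    rw [key _ hFd]; rfl
  rw [h1, hFeq'.fderiv_eq]
  have hg1 : DifferentiableAt ℝ (fun y => deriv φ (a y)) z :=
    ((hφ'd (a z)).hasDerivAt.comp_hasFDerivAt z hazd.hasFDerivAt).differentiableAt
  have hg1' : fderiv ℝ (fun y => deriv φ (a y)) z = deriv (deriv φ) (a z) • fderiv ℝ a z :=
    ((hφ'd (a z)).hasDerivAt.comp_hasFDerivAt z hazd.hasFDerivAt).fderiv
  have hg2 : DifferentiableAt ℝ (fun y => fderiv ℝ a y v) z :=
    hfd.clm_apply (differentiableAt_const v)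
  rw [fderiv_fun_mul hg1 hg2]
  simp only [ContinuousLinearMap.add_apply, ContinuousLinearMap.smul_apply, smul_eq_mul,
    hg1', key _ hfd, ContinuousLinearMap.flip_apply]
  ring


/-- if `ψ` is smooth and concave with `ψ(s) = s` for `s ≤ -1`, `ψ(s) = 0` for
`s ≥ 1`, and `a` is smooth on an open set `Ω` with `0 ≤ Δa ≤ M e^{2a}` (curvature in
`[-M,0]`), then for any `k ∈ ℝ` the function `u = ψ(a-k)+k` is smooth on `Ω` and the Gauss
curvature of `e^{2u}|dz|²` is bounded below by `-e²M`, uniformly in `k`. -/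
theorem stmt6 (ψ : ℝ → ℝ) (hψ : ContDiff ℝ (⊤ : ℕ∞) ψ)
    (hψ1 : ∀ s : ℝ, s ≤ -1 → ψ s = s) (hψ2 : ∀ s : ℝ, 1 ≤ s → ψ s = 0)
    (hψcc : ∀ s : ℝ, deriv (deriv ψ) s ≤ 0)
    (Ω : Set ℂ) (hΩ : IsOpen Ω) (M : ℝ)
    (a : ℂ → ℝ) (ha : ContDiffOn ℝ (⊤ : ℕ∞) a Ω)
    (hK₁ : ∀ z ∈ Ω, 0 ≤ lap a z)
    (hK₂ : ∀ z ∈ Ω, lap a z ≤ M * Real.exp (2 * a z))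
    (k : ℝ) :
    ContDiffOn ℝ (⊤ : ℕ∞) (fun z => ψ (a z - k) + k) Ω ∧
      ∀ z ∈ Ω,
        -(Real.exp 2 * M) ≤
          -(Real.exp (-2 * (ψ (a z - k) + k)) * lap (fun w => ψ (a w - k) + k) z) := by
  -- basic facts about ψ
  have hψd : Differentiable ℝ ψ := hψ.differentiable (by simp)
  have hψI : ContDiff ℝ ((⊤ : ℕ∞) : WithTop ℕ∞) ψ := hψ.of_le (by simp)
  have hψ'd : Differentiable ℝ (deriv ψ) :=
    (contDiff_infty_iff_deriv.mp hψI).2.differentiable (by simp)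
  have hanti : Antitone (deriv ψ) := antitone_of_deriv_nonpos hψ'd hψcc
  have hone : ∀ s : ℝ, s < -1 → deriv ψ s = 1 := by
    intro s hs
    have he : ψ =ᶠ[nhds s] (fun t => t) := by
      filter_upwards [Iio_mem_nhds hs] with t ht
      exact hψ1 t (le_of_lt ht)
    rw [he.deriv_eq, deriv_id'']
  have hzero : ∀ s : ℝ, 1 < s → deriv ψ s = 0 := by
    intro s hs
    have he : ψ =ᶠ[nhds s] (fun _ => 0) := by
      filter_upwards [Ioi_mem_nhds hs] with t ht
      exact hψ2 t (le_of_lt ht)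
    rw [he.deriv_eq, deriv_const]
  have hle1 : ∀ s : ℝ, deriv ψ s ≤ 1 := by
    intro s
    have h := hanti (min_le_left s (-2))
    rwa [hone (min s (-2)) (lt_of_le_of_lt (min_le_right s (-2)) (by norm_num))] at h
  have hge0 : ∀ s : ℝ, 0 ≤ deriv ψ s := by
    intro s
    have h := hanti (le_max_left s 2)
    rwa [hzero (max s 2) (by linarith [le_max_right s 2])] at h
  have hbound : ∀ s : ℝ, s ≤ 1 → s - ψ s ≤ 1 := by
    intro s hs
    have hmono : Monotone (fun s => s - ψ s) := by
      apply monotone_of_deriv_nonneg (differentiable_id.sub hψd)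
      intro x
      rw [deriv_sub differentiableAt_id (hψd x)]
      simp only [deriv_id]
      linarith [hle1 x]
    have := hmono hs
    simpa [hψ2 1 le_rfl] using this
  have hmain : ∀ s : ℝ, deriv ψ s * Real.exp (2 * (s - ψ s)) ≤ Real.exp 2 := by
    intro s
    by_cases hs : 1 < s
    · rw [hzero s hs, zero_mul]; positivity
    · push_neg at hs
      have h1 : Real.exp (2 * (s - ψ s)) ≤ Real.exp 2 :=
        Real.exp_le_exp.mpr (by linarith [hbound s hs])
      calc deriv ψ s * Real.exp (2 * (s - ψ s)) ≤ 1 * Real.exp 2 :=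
            mul_le_mul (hle1 s) h1 (Real.exp_pos _).le zero_le_one
        _ = Real.exp 2 := one_mul _
  -- the shifted function
  set φ : ℝ → ℝ := fun s => ψ (s - k) + k with hφdef
  have hφc : ContDiff ℝ (⊤ : ℕ∞) φ := (hψ.comp (contDiff_id.sub contDiff_const)).add contDiff_const
  have hdφ : deriv φ = fun s => deriv ψ (s - k) := by
    funext s
    rw [hφdef]
    rw [deriv_add_const, deriv_comp_sub_const]
  have hdd : ∀ s : ℝ, deriv (deriv φ) s = deriv (deriv ψ) (s - k) := by
    intro s
    rw [hdφ, deriv_comp_sub_const]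
  constructor
  · exact (hψ.comp_contDiffOn (ha.sub contDiffOn_const)).add contDiffOn_const
  · intro z hz
    have hM : 0 ≤ M := by
      nlinarith [hK₁ z hz, hK₂ z hz, Real.exp_pos (2 * a z)]
    have h1 := iFD2_comp hφc hΩ ha hz 1
    have hI := iFD2_comp hφc hΩ ha hz Complex.I
    set x1 : ℝ := fderiv ℝ a z 1
    set xI : ℝ := fderiv ℝ a z Complex.I
    have hlap : lap (fun w => ψ (a w - k) + k) z
        = deriv (deriv ψ) (a z - k) * (x1 * x1 + xI * xI)
          + deriv ψ (a z - k) * lap a z := by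
      simp only [lap]
      rw [h1, hI, hdd, hdφ]
      ring
    rw [hlap]
    set E : ℝ := Real.exp (-2 * (ψ (a z - k) + k)) with hE
    have hEpos : 0 < E := Real.exp_pos _
    have hexp : E * Real.exp (2 * a z) = Real.exp (2 * ((a z - k) - ψ (a z - k))) := by
      rw [hE, ← Real.exp_add]
      congr 1
      ring
    have hQ : 0 ≤ x1 * x1 + xI * xI := add_nonneg (mul_self_nonneg _) (mul_self_nonneg _)
    have step1 : E * (deriv (deriv ψ) (a z - k) * (x1 * x1 + xI * xI)
        + deriv ψ (a z - k) * lap a z) ≤ E * (deriv ψ (a z - k) * lap a z) := by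
      have h := mul_nonpos_of_nonpos_of_nonneg (hψcc (a z - k)) hQ
      nlinarith
    have step2 : E * (deriv ψ (a z - k) * lap a z)
        ≤ E * (deriv ψ (a z - k) * (M * Real.exp (2 * a z))) := by
      apply mul_le_mul_of_nonneg_left _ hEpos.le
      exact mul_le_mul_of_nonneg_left (hK₂ z hz) (hge0 _)
    have step3 : E * (deriv ψ (a z - k) * (M * Real.exp (2 * a z)))
        = M * (deriv ψ (a z - k) * Real.exp (2 * ((a z - k) - ψ (a z - k)))) := by
      rw [← hexp]; ring
    have step4 : M * (deriv ψ (a z - k) * Real.exp (2 * ((a z - k) - ψ (a z - k))))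
        ≤ M * Real.exp 2 := mul_le_mul_of_nonneg_left (hmain _) hM
    linarith
end

section
/- Define s(r) = ln(2/(1+r²)) for r ≥ 0, λ(t) = e^{−6/t} for t > 0, and for z ∈ ℂ, t ∈ (0,1) set S(z,t) = s(|z|/λ(t)) − ln( λ(t)·(−ln λ(t)) ) + (1/2)ln 3. Then for all t ∈ (0,1) and all z ∈ ℂ: ∂S/∂t − e^{−2S}ΔS ≥ 6/t² > 0, where Δ is the flat Laplacian acting in z. In particular, S is a strict supersolution of the two-dimensional Ricci flow equation ∂u/∂t = e^{−2u}Δu. -/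
/-!
For `t > 0` the barrier has the form `S(z,t) = c(t) - log (a(t) + |z|²)` with
`a = λ² = e^{-12/t}` and `c(t) = log t - 6/t - ½ log 3`. For any such ansatz
`Δ_z S = -4a/(a + |z|²)²`, so `e^{-2S} ΔS = -4a e^{-2c}` does not depend on `z`, and
`∂_t S - e^{-2S} ΔS = c' - a'/(a + |z|²) + 4a e^{-2c}`. Here `c' = 1/t + 6/t²`, `a' = 12a/t²` and
`4a e^{-2c} = 12/t²`, so the operator equals `6/t² + 1/t + (12/t²) |z|²/(a + |z|²) ≥ 6/t²`.
-/

open Complex Metric Set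

open scoped RealInnerProductSpace

theorem iteratedFDeriv_two_apply_diag {𝕜 E F : Type*} [NontriviallyNormedField 𝕜]
    [NormedAddCommGroup E] [NormedSpace 𝕜 E] [NormedAddCommGroup F] [NormedSpace 𝕜 F]
    {f : E → F} {z : E} (hf : ContDiffAt 𝕜 2 f z) (v : E) :
    iteratedFDeriv 𝕜 2 f z ![v, v] = fderiv 𝕜 (fun w => fderiv 𝕜 f w v) z v := by
  have hdf : DifferentiableAt 𝕜 (fderiv 𝕜 f) z :=
    (hf.fderiv_right (m := 1) (by norm_num)).differentiableAt one_ne_zero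
  rw [iteratedFDeriv_two_apply, fderiv_clm_apply hdf (differentiableAt_const v)]
  simp

section
variable {E : Type*} [NormedAddCommGroup E] [InnerProductSpace ℝ E] {a : ℝ}

theorem hasFDerivAt_log_add_norm_sq (ha : 0 < a) (w : E) :
    HasFDerivAt (fun w => Real.log (a + ‖w‖ ^ 2)) ((a + ‖w‖ ^ 2)⁻¹ • (2 • innerSL ℝ w)) w := by
  have hq : a + ‖w‖ ^ 2 ≠ 0 := by positivity
  exact (((hasStrictFDerivAt_norm_sq w).hasFDerivAt).const_add a).log hq

theorem fderiv_log_add_norm_sq_apply (ha : 0 < a) (v : E) :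
    (fun w => fderiv ℝ (fun w => Real.log (a + ‖w‖ ^ 2)) w v)
      = fun w => 2 * ⟪w, v⟫ / (a + ‖w‖ ^ 2) := by
  funext w
  rw [(hasFDerivAt_log_add_norm_sq ha w).fderiv]
  simp only [smul_apply, coe_innerSL_apply, nsmul_eq_mul, Nat.cast_ofNat,
    smul_eq_mul]
  ring

theorem fderiv_inner_div_add_norm_sq_apply (ha : 0 < a) (z v : E) :
    fderiv ℝ (fun w => 2 * ⟪v, w⟫ / (a + ‖w‖ ^ 2)) z v
      = 2 * ‖v‖ ^ 2 / (a + ‖z‖ ^ 2) - 4 * ⟪z, v⟫ ^ 2 / (a + ‖z‖ ^ 2) ^ 2 := by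
  have hq : a + ‖z‖ ^ 2 ≠ 0 := by positivity
  have hnum := (innerSL ℝ v).hasFDerivAt.const_mul (x := z) 2
  have hinv := (hasDerivAt_inv hq).comp_hasFDerivAt z
    ((hasStrictFDerivAt_norm_sq z).hasFDerivAt.const_add a)
  rw [HasFDerivAt.fderiv (f := fun w => 2 * ⟪v, w⟫ / (a + ‖w‖ ^ 2)) (hnum.mul hinv)]
  simp only [coe_innerSL_apply, neg_smul, smul_neg, Function.comp_apply,
    add_apply, neg_apply, smul_apply,
    nsmul_eq_mul, Nat.cast_ofNat, smul_eq_mul, real_inner_self_eq_norm_sq, div_eq_mul_inv]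
  rw [real_inner_comm v z]
  ring

theorem contDiff_log_add_norm_sq (ha : 0 < a) :
    ContDiff ℝ 2 (fun w : E => Real.log (a + ‖w‖ ^ 2)) :=
  (contDiff_const.add (contDiff_norm_sq ℝ)).log fun w => by positivity

theorem iteratedFDeriv_two_log_add_norm_sq (ha : 0 < a) (z v : E) :
    iteratedFDeriv ℝ 2 (fun w => Real.log (a + ‖w‖ ^ 2)) z ![v, v]
      = 2 * ‖v‖ ^ 2 / (a + ‖z‖ ^ 2) - 4 * ⟪z, v⟫ ^ 2 / (a + ‖z‖ ^ 2) ^ 2 := by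
  rw [iteratedFDeriv_two_apply_diag (contDiff_log_add_norm_sq ha).contDiffAt,
    fderiv_log_add_norm_sq_apply ha, ← fderiv_inner_div_add_norm_sq_apply ha]
  simp_rw [real_inner_comm v]

end

theorem lap_log_add_norm_sq {a : ℝ} (ha : 0 < a) (z : ℂ) :
    lap (fun w => Real.log (a + ‖w‖ ^ 2)) z = 4 * a / (a + ‖z‖ ^ 2) ^ 2 := by
  rw [lap, iteratedFDeriv_two_log_add_norm_sq ha, iteratedFDeriv_two_log_add_norm_sq ha]
  have hq : a + ‖z‖ ^ 2 ≠ 0 := by positivity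
  simp only [norm_one, one_pow, norm_I, Complex.inner, conj_re, conj_im, mul_re, mul_one, one_mul,
    I_re, I_im, zero_mul, mul_neg, sub_neg_eq_add, zero_add]
  field_simp
  rw [Complex.sq_norm, Complex.normSq_apply]
  ring

open Laplacian in
theorem lap_eq_laplacian (u : ℂ → ℝ) : lap u = Δ u :=
  funext fun z => by rw [InnerProductSpace.laplacian_eq_iteratedFDeriv_complexPlane, lap]

open Laplacian in
theorem lap_const_sub {u : ℂ → ℝ} {z : ℂ} (hu : ContDiffAt ℝ 2 u z) (c : ℝ) :
    lap (fun w => c - u w) z = -lap u z := by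
  rw [lap_eq_laplacian, lap_eq_laplacian]
  exact (contDiffAt_const.laplacian_sub hu (f₁ := fun _ => c)).trans (by simp)

open Filter Topology

theorem deriv_sub_exp_mul_lap_of_eventuallyEq {u : ℂ → ℝ → ℝ} {c a : ℝ → ℝ} {c' a' t : ℝ}
    (hu : ∀ᶠ τ in 𝓝 t, ∀ w, u w τ = c τ - Real.log (a τ + ‖w‖ ^ 2))
    (hc : HasDerivAt c c' t) (ha : HasDerivAt a a' t) (ha0 : 0 < a t) (z : ℂ) :
    deriv (u z) t - Real.exp (-2 * u z t) * lap (fun w => u w t) z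
      = c' - a' / (a t + ‖z‖ ^ 2) + 4 * a t * Real.exp (-2 * c t) := by
  have hq : 0 < a t + ‖z‖ ^ 2 := by positivity
  have hut : (fun w => u w t) = fun w => c t - Real.log (a t + ‖w‖ ^ 2) :=
    funext hu.self_of_nhds
  have hderiv : HasDerivAt (u z) (c' - a' / (a t + ‖z‖ ^ 2)) t :=
    (hc.sub ((ha.add_const _).log hq.ne')).congr_of_eventuallyEq (hu.mono fun τ h => h z)
  have hexp : Real.exp (-2 * u z t) = Real.exp (-2 * c t) * (a t + ‖z‖ ^ 2) ^ 2 := by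
    rw [congrFun hut z, show -2 * (c t - Real.log (a t + ‖z‖ ^ 2))
      = -2 * c t + Real.log (a t + ‖z‖ ^ 2) + Real.log (a t + ‖z‖ ^ 2) by ring,
      Real.exp_add, Real.exp_add, Real.exp_log hq]
    ring
  rw [hderiv.deriv, hut, lap_const_sub (contDiff_log_add_norm_sq ha0).contDiffAt,
    lap_log_add_norm_sq ha0, hexp]
  field_simp
  ring

theorem log_two_div_one_add_sq_sub_log_add_half_log_three {t : ℝ} (ht : t ≠ 0) (r : ℝ) :
    Real.log (2 / (1 + (r / Real.exp (-6 / t)) ^ 2))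
        - Real.log (Real.exp (-6 / t) * (-Real.log (Real.exp (-6 / t))))
        + (1 / 2) * Real.log 3
      = (Real.log t - 6 / t - Real.log 3 / 2) - Real.log (Real.exp (-12 / t) + r ^ 2) := by
  have h6 : -Real.log (Real.exp (-6 / t)) = 6 / t := by rw [Real.log_exp]; ring
  set L := Real.exp (-6 / t) with hL
  have hL0 : 0 < L := Real.exp_pos _
  have hL2 : Real.exp (-12 / t) = L ^ 2 := by rw [hL, sq, ← Real.exp_add]; ring_nf
  have hq : 0 < L ^ 2 + r ^ 2 := by positivity
  have h1 : 2 / (1 + (r / L) ^ 2) = 2 * L ^ 2 / (L ^ 2 + r ^ 2) := by field_simp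
  rw [h6, h1, hL2, Real.log_div (by positivity) hq.ne', Real.log_mul two_ne_zero (by positivity),
    Real.log_pow, Real.log_mul hL0.ne' (by positivity), hL, Real.log_exp,
    Real.log_div (by norm_num) ht, show (6 : ℝ) = 2 * 3 by norm_num,
    Real.log_mul two_ne_zero three_ne_zero]
  push_cast
  ring

theorem exp_neg_twelve_div_mul_exp_neg_two_mul {t : ℝ} (ht : 0 < t) :
    Real.exp (-12 / t) * Real.exp (-2 * (Real.log t - 6 / t - Real.log 3 / 2)) = 3 / t ^ 2 := by
  rw [← Real.exp_add, show -12 / t + -2 * (Real.log t - 6 / t - Real.log 3 / 2)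
    = Real.log 3 - 2 * Real.log t by ring, Real.exp_sub, Real.exp_log three_pos,
    ← Real.log_rpow ht, Real.exp_log (by positivity)]
  norm_cast

/-- with `s(r) = ln(2/(1+r²))`, `λ(t) = e^{-6/t}`, the spherical barrier
`S(z,t) = s(|z|/λ(t)) - ln(λ(t)·(-ln λ(t))) + ½ ln 3` satisfies
`∂S/∂t - e^{-2S} ΔS ≥ 6/t² > 0` for all `t ∈ (0,1)` and all `z ∈ ℂ`; i.e. it is a strict
supersolution of the 2D Ricci flow equation `∂u/∂t = e^{-2u}Δu`. -/
theorem stmt7 (S : ℂ → ℝ → ℝ)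
    (hS : ∀ (z : ℂ) (t : ℝ), S z t =
      Real.log (2 / (1 + (‖z‖ / Real.exp (-6/t))^2))
        - Real.log (Real.exp (-6/t) * (-Real.log (Real.exp (-6/t))))
        + (1/2) * Real.log 3) :
    ∀ t ∈ Ioo (0:ℝ) 1, ∀ z : ℂ,
      (0:ℝ) < 6 / t^2 ∧
        6 / t^2 ≤ deriv (S z) t - Real.exp (-2 * S z t) * lap (fun w => S w t) z := by
  rintro t ⟨ht, -⟩ z
  refine ⟨by positivity, ?_⟩
  have hu : ∀ᶠ τ in 𝓝 t, ∀ w, S w τ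
      = (Real.log τ - 6 / τ - Real.log 3 / 2) - Real.log (Real.exp (-12 / τ) + ‖w‖ ^ 2) :=
    (eventually_ne_nhds ht.ne').mono fun τ hτ w =>
      (hS w τ).trans (log_two_div_one_add_sq_sub_log_add_half_log_three hτ _)
  have hc : HasDerivAt (fun τ => Real.log τ - 6 / τ - Real.log 3 / 2) (t⁻¹ + 6 / t ^ 2) t :=
    (((Real.hasDerivAt_log ht.ne').sub ((hasDerivAt_inv ht.ne').const_mul 6)).sub_const
      (Real.log 3 / 2)).congr_deriv (by ring)
  have ha : HasDerivAt (fun τ => Real.exp (-12 / τ)) (Real.exp (-12 / t) * (12 / t ^ 2)) t :=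
    ((hasDerivAt_inv ht.ne').const_mul (-12)).exp.congr_deriv (by ring_nf)
  rw [deriv_sub_exp_mul_lap_of_eventuallyEq hu hc ha (Real.exp_pos _) z, mul_assoc,
    exp_neg_twelve_div_mul_exp_neg_two_mul ht]
  have hq : 0 < Real.exp (-12 / t) + ‖z‖ ^ 2 := by positivity
  calc 6 / t ^ 2
      ≤ 6 / t ^ 2 + (t⁻¹ + 12 / t ^ 2 * (‖z‖ ^ 2 / (Real.exp (-12 / t) + ‖z‖ ^ 2))) :=
        le_add_of_nonneg_right (by positivity)
    _ = _ := by field_simp; ring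
end

section
/- Let Ω ⊆ ℂ be a bounded open set. Let w : Ω → ℝ be smooth and bounded above with Δw ≥ e^{2w} on Ω, and let v : Ω → ℝ be smooth and bounded below with Δv ≤ e^{2v} on Ω, such that v(z) → +∞ as z → ∂Ω (i.e. for every K there is a compact subset of Ω outside of which v > K). Then w ≤ v throughout Ω. -/
open Complex Metric Set Filter Topology

/-- 1D second derivative test: at an interior local max, the second derivative is ≤ 0. -/
lemma aux_secondDeriv_nonpos {g g' : ℝ → ℝ} {c : ℝ}
    (hg : ∀ᶠ t in 𝓝 (0:ℝ), HasDerivAt g (g' t) t)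
    (hg' : HasDerivAt g' c 0)
    (hmax : IsLocalMax g 0) : c ≤ 0 := by
  by_contra hc
  push_neg at hc
  have h0 : g' 0 = 0 := hmax.hasDerivAt_eq_zero hg.self_of_nhds
  have hslope : Tendsto (slope g' 0) (𝓝[≠] (0:ℝ)) (𝓝 c) :=
    hasDerivAt_iff_tendsto_slope.mp hg'
  have hpos : ∀ᶠ t in 𝓝[≠] (0:ℝ), 0 < slope g' 0 t :=
    hslope.eventually (eventually_gt_nhds hc)
  rw [eventually_nhdsWithin_iff] at hpos
  have hall : ∀ᶠ t in 𝓝 (0:ℝ),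
      HasDerivAt g (g' t) t ∧ g t ≤ g 0 ∧ (t ∈ ({(0:ℝ)}ᶜ : Set ℝ) → 0 < slope g' 0 t) :=
    hg.and (hmax.and hpos)
  rcases Metric.eventually_nhds_iff.mp hall with ⟨ε, hε, hball⟩
  set δ := ε / 2 with hδ
  have hδpos : 0 < δ := by positivity
  have hmem : ∀ t ∈ Icc (0:ℝ) δ, dist t 0 < ε := by
    intro t ht
    rw [Real.dist_eq, sub_zero, _root_.abs_of_nonneg ht.1]
    linarith [ht.2]
  have hmono : StrictMonoOn g (Icc (0:ℝ) δ) := by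
    apply strictMonoOn_of_deriv_pos (convex_Icc 0 δ)
    · intro t ht
      exact ((hball (hmem t ht)).1.differentiableAt.continuousAt).continuousWithinAt
    · intro t ht
      rw [interior_Icc] at ht
      have h := hball (show dist t 0 < ε by
        rw [Real.dist_eq, sub_zero, _root_.abs_of_nonneg ht.1.le]; linarith [ht.2])
      rw [h.1.deriv]
      have hs := h.2.2 (by simp [ne_of_gt ht.1])
      rw [slope_def_field, h0, sub_zero, sub_zero] at hs
      rcases div_pos_iff.mp hs with ⟨h1, _⟩ | ⟨_, h2⟩
      · exact h1
      · linarith [ht.1]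
  have h1 : g 0 < g δ := hmono ⟨le_refl 0, hδpos.le⟩ ⟨hδpos.le, le_refl δ⟩ hδpos
  have h2 : g δ ≤ g 0 := (hball (show dist δ 0 < ε by
    rw [Real.dist_eq, sub_zero, _root_.abs_of_nonneg hδpos.le]; linarith)).2.1
  linarith

/-- Directional second-derivative comparison at a local max of `w - v`. -/
lemma aux_dir_le {w v : ℂ → ℝ} {z₀ : ℂ} (d : ℂ)
    (hw : ContDiffAt ℝ 2 w z₀) (hv : ContDiffAt ℝ 2 v z₀)
    (hmax : IsLocalMax (fun z => w z - v z) z₀) :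
    iteratedFDeriv ℝ 2 w z₀ ![d, d] ≤ iteratedFDeriv ℝ 2 v z₀ ![d, d] := by
  set ℓ : ℝ → ℂ := fun t => z₀ + t • d with hℓdef
  have hℓ0 : ℓ 0 = z₀ := by simp [hℓdef]
  have hℓd : ∀ t : ℝ, HasDerivAt ℓ d t := by
    intro t
    have : HasDerivAt (fun s : ℝ => s • d) ((1:ℝ) • d) t := (hasDerivAt_id t).smul_const d
    simpa [hℓdef, one_smul] using this.const_add z₀
  have hℓcont : Tendsto ℓ (𝓝 0) (𝓝 z₀) := by
    have h : Tendsto ℓ (𝓝 0) (𝓝 (ℓ 0)) := (hℓd 0).continuousAt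
    rwa [hℓ0] at h
  -- first derivatives along the line
  have hfst : ∀ (u : ℂ → ℝ), ContDiffAt ℝ 2 u z₀ →
      ∀ᶠ t in 𝓝 (0:ℝ), HasDerivAt (fun s => u (ℓ s)) (fderiv ℝ u (ℓ t) d) t := by
    intro u hu
    have hev : ∀ᶠ y in 𝓝 z₀, DifferentiableAt ℝ u y := by
      filter_upwards [hu.eventually (by norm_num)] with y hy
      exact hy.differentiableAt (by norm_num)
    filter_upwards [hℓcont.eventually hev] with t ht
    exact ht.hasFDerivAt.comp_hasDerivAt t (hℓd t)
  -- second derivative along the line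
  have hsnd : ∀ (u : ℂ → ℝ), ContDiffAt ℝ 2 u z₀ →
      HasDerivAt (fun t => fderiv ℝ u (ℓ t) d) (iteratedFDeriv ℝ 2 u z₀ ![d, d]) 0 := by
    intro u hu
    have hdf : DifferentiableAt ℝ (fderiv ℝ u) z₀ := by
      have : ContDiffAt ℝ 1 (fderiv ℝ u) z₀ := hu.fderiv_right (by norm_num)
      exact this.differentiableAt (by norm_num)
    have hF : HasFDerivAt (fderiv ℝ u) (fderiv ℝ (fderiv ℝ u) z₀) (ℓ 0) := by
      rw [hℓ0]; exact hdf.hasFDerivAt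
    have h1 : HasDerivAt (fun t => fderiv ℝ u (ℓ t)) (fderiv ℝ (fderiv ℝ u) z₀ d) 0 := by
      exact hF.comp_hasDerivAt 0 (hℓd 0)
    have h2 := h1.clm_apply (hasDerivAt_const (0:ℝ) d)
    have h3 : iteratedFDeriv ℝ 2 u z₀ ![d, d] = fderiv ℝ (fderiv ℝ u) z₀ d d := by
      rw [iteratedFDeriv_two_apply]; simp
    rw [h3]
    simpa [hℓ0] using h2
  -- combine
  have hg : ∀ᶠ t in 𝓝 (0:ℝ), HasDerivAt (fun s => w (ℓ s) - v (ℓ s))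
      (fderiv ℝ w (ℓ t) d - fderiv ℝ v (ℓ t) d) t := by
    filter_upwards [hfst w hw, hfst v hv] with t h1 h2
    exact h1.sub h2
  have hg' : HasDerivAt (fun t => fderiv ℝ w (ℓ t) d - fderiv ℝ v (ℓ t) d)
      (iteratedFDeriv ℝ 2 w z₀ ![d, d] - iteratedFDeriv ℝ 2 v z₀ ![d, d]) 0 :=
    (hsnd w hw).sub (hsnd v hv)
  have hgmax : IsLocalMax (fun t => w (ℓ t) - v (ℓ t)) 0 := by
    have := hℓcont.eventually hmax
    simpa [IsLocalMax, IsMaxFilter, hℓ0] using this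
  linarith [aux_secondDeriv_nonpos hg hg' hgmax]

/-- elliptic comparison for the Liouville equation: on a bounded open set
`Ω ⊆ ℂ`, if `w` is smooth, bounded above, with `Δw ≥ e^{2w}`, and `v` is smooth, bounded
below, with `Δv ≤ e^{2v}`, and `v → +∞` at `∂Ω` (for every `K` there is a compact subset
of `Ω` outside which `v > K`), then `w ≤ v` on `Ω`. -/
theorem stmt8 (Ω : Set ℂ) (hΩ : IsOpen Ω) (hΩbdd : Bornology.IsBounded Ω)
    (w v : ℂ → ℝ)
    (hw : ContDiffOn ℝ (⊤ : ℕ∞) w Ω) (hwbdd : ∃ A : ℝ, ∀ z ∈ Ω, w z ≤ A)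
    (hwK : ∀ z ∈ Ω, Real.exp (2 * w z) ≤ lap w z)
    (hv : ContDiffOn ℝ (⊤ : ℕ∞) v Ω) (hvbdd : ∃ B : ℝ, ∀ z ∈ Ω, B ≤ v z)
    (hvK : ∀ z ∈ Ω, lap v z ≤ Real.exp (2 * v z))
    (hvblow : ∀ K : ℝ, ∃ Kc : Set ℂ, IsCompact Kc ∧ Kc ⊆ Ω ∧ ∀ z ∈ Ω \ Kc, K < v z) :
    ∀ z ∈ Ω, w z ≤ v z := by
  intro z hz
  by_contra hlt
  push_neg at hlt
  obtain ⟨A, hA⟩ := hwbdd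
  obtain ⟨Kc, hKcomp, hKsub, hKgt⟩ := hvblow A
  have huc : ContinuousOn (fun y => w y - v y) Ω := (hw.sub hv).continuousOn
  have hzK : z ∈ Kc := by
    by_contra hzk
    have := hKgt z ⟨hz, hzk⟩
    linarith [hA z hz]
  obtain ⟨z₀, hz₀K, hz₀max⟩ := hKcomp.exists_isMaxOn ⟨z, hzK⟩ (huc.mono hKsub)
  have hz₀Ω : z₀ ∈ Ω := hKsub hz₀K
  have hglob : ∀ y ∈ Ω, w y - v y ≤ w z₀ - v z₀ := by
    intro y hy
    by_cases hyK : y ∈ Kc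
    · exact hz₀max hyK
    · have h1 := hKgt y ⟨hy, hyK⟩
      have h2 := hA y hy
      have h4 : w z - v z ≤ w z₀ - v z₀ := hz₀max hzK
      linarith
  have hlmax : IsLocalMax (fun y => w y - v y) z₀ := by
    filter_upwards [hΩ.mem_nhds hz₀Ω] with y hy using hglob y hy
  have hw2 : ContDiffAt ℝ 2 w z₀ := (hw.contDiffAt (hΩ.mem_nhds hz₀Ω)).of_le (WithTop.coe_le_coe.mpr le_top)
  have hv2 : ContDiffAt ℝ 2 v z₀ := (hv.contDiffAt (hΩ.mem_nhds hz₀Ω)).of_le (WithTop.coe_le_coe.mpr le_top)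
  have hd1 := aux_dir_le 1 hw2 hv2 hlmax
  have hdI := aux_dir_le Complex.I hw2 hv2 hlmax
  have h5 := hwK z₀ hz₀Ω
  have h6 := hvK z₀ hz₀Ω
  have h7 : Real.exp (2 * w z₀) ≤ Real.exp (2 * v z₀) := by
    unfold lap at h5 h6; linarith
  have h8 : w z₀ ≤ v z₀ := by linarith [Real.exp_le_exp.mp h7]
  have h9 := hglob z hz
  linarith
end

section
/- Let ε > 0, M ∈ ℝ, t₀ > 0, and let u be smooth on a neighbourhood of D̄_ε × (0,t₀), satisfying ∂u/∂t = e^{−2u}Δu there, and suppose u ≥ M + 1 on ∂D_ε × (0,t₀). Let φ : ℝ → ℝ be smooth with φ(s) = s for s ≥ 1, φ(s) = 0 for s ≤ −1, and φ'' ≥ 0. Then the function t ↦ ∫_{D_ε} φ(M − u(z,t)) dz is nonincreasing on (0,t₀). -/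
open Complex Metric Set

open MeasureTheory
open scoped ContDiff
set_option maxHeartbeats 2000000

lemma mem_ball_iff_sq (ε : ℝ) (hε : 0 < ε) (x y : ℝ) :
    (↑x + ↑y * Complex.I ∈ ball (0:ℂ) ε) ↔ x^2 + y^2 < ε^2 := by
  rw [mem_ball_zero_iff, Complex.norm_def, Real.sqrt_lt' hε,
    Complex.normSq_add_mul_I]

lemma mem_cball_iff_sq (ε : ℝ) (hε : 0 < ε) (x y : ℝ) :
    (↑x + ↑y * Complex.I ∈ closedBall (0:ℂ) ε) ↔ x^2 + y^2 ≤ ε^2 := by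
  rw [mem_closedBall_zero_iff, Complex.norm_def,
    Complex.normSq_add_mul_I, show ε = Real.sqrt (ε^2) by rw [Real.sqrt_sq hε.le],
    Real.sqrt_le_sqrt_iff (by positivity), Real.sq_sqrt (by positivity)]

lemma mem_sphere_iff_sq (ε : ℝ) (hε : 0 < ε) (x y : ℝ) :
    (↑x + ↑y * Complex.I ∈ sphere (0:ℂ) ε) ↔ x^2 + y^2 = ε^2 := by
  rw [mem_sphere_zero_iff_norm, Complex.norm_def,
    Complex.normSq_add_mul_I, show ε = Real.sqrt (ε^2) by rw [Real.sqrt_sq hε.le],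
    Real.sqrt_inj (by positivity) (by positivity), Real.sq_sqrt (by positivity)]

lemma keyX (ε : ℝ) (hε : 0 < ε) (Ω : Set ℂ) (hsub : closedBall (0:ℂ) ε ⊆ Ω)
    (f : ℂ → ℝ) (F : ℂ → ℂ →L[ℝ] ℝ)
    (hd : ∀ z ∈ Ω, HasFDerivAt f (F z) z)
    (hFc : ContinuousOn (fun z => F z 1) Ω)
    (hb : ∀ z ∈ sphere (0:ℂ) ε, f z = 0) :
    ∫ z in ball (0:ℂ) ε, F z 1 = 0 := by
  have hmp : MeasurePreserving (Complex.measurableEquivRealProd.symm) volume volume :=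
    Complex.volume_preserving_equiv_real_prod.symm _
  have hemb := Complex.measurableEquivRealProd.symm.measurableEmbedding
  set e : ℝ × ℝ → ℂ := fun p => ↑p.1 + ↑p.2 * Complex.I with he
  have hfe : ⇑Complex.measurableEquivRealProd.symm = e := by
    funext p
    rw [Complex.measurableEquivRealProd_symm_apply]
    apply Complex.ext <;> simp [he]
  have hecont : Continuous e := by fun_prop
  set g : ℝ × ℝ → ℝ := fun p => F (e p) 1 with hg
  set T : Set (ℝ × ℝ) := e ⁻¹' (ball (0:ℂ) ε) with hT
  have hTmeas : MeasurableSet T := (isOpen_ball.preimage hecont).measurableSet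
  have h1 : ∫ z in ball (0:ℂ) ε, F z 1 = ∫ p in T, g p := by
    rw [← hmp.setIntegral_preimage_emb hemb (fun z => F z 1) (ball 0 ε), hfe]
  -- compactness of C
  set C : Set (ℝ × ℝ) := e ⁻¹' (closedBall (0:ℂ) ε) with hC
  have hCeq : C = (fun z : ℂ => (z.re, z.im)) '' (closedBall (0:ℂ) ε) := by
    ext p
    constructor
    · intro hp; exact ⟨e p, hp, by simp [he]⟩
    · rintro ⟨z, hz, rfl⟩
      have : e (z.re, z.im) = z := by apply Complex.ext <;> simp [he]
      simpa [hC, mem_preimage, this] using hz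
  have hCcomp : IsCompact C := by
    rw [hCeq]
    exact (isCompact_closedBall _ _).image (by fun_prop)
  have hgint : IntegrableOn g T := by
    apply IntegrableOn.mono_set (t := C)
    · exact ContinuousOn.integrableOn_compact hCcomp
        (hFc.comp hecont.continuousOn (fun p hp => hsub hp))
    · exact preimage_mono ball_subset_closedBall
  have h2 : ∫ p in T, g p = ∫ p, T.indicator g p := (integral_indicator hTmeas).symm
  have hindint : Integrable (T.indicator g) := (integrable_indicator_iff hTmeas).2 hgint
  have h3 : ∫ p, T.indicator g p = ∫ y : ℝ, (∫ x : ℝ, T.indicator g (x, y)) := by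
    rw [show (volume : Measure (ℝ × ℝ)) = (volume : Measure ℝ).prod volume from Measure.volume_eq_prod ℝ ℝ]
    exact integral_prod_symm _ (by rwa [← Measure.volume_eq_prod])
  have h4 : ∀ y : ℝ, (∫ x : ℝ, T.indicator g (x, y)) = 0 := by
    intro y
    by_cases hy : y ^ 2 < ε ^ 2
    · set a : ℝ := Real.sqrt (ε ^ 2 - y ^ 2) with haa
      have ha2 : a ^ 2 = ε ^ 2 - y ^ 2 := Real.sq_sqrt (by linarith)
      have ha : 0 < a := Real.sqrt_pos.2 (by linarith)
      have hmem : ∀ x : ℝ, ((x, y) ∈ T) ↔ x ∈ Ioo (-a) a := by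
        intro x
        rw [hT, mem_preimage, he, mem_ball_iff_sq ε hε, mem_Ioo]
        constructor
        · intro h
          constructor <;> nlinarith
        · rintro ⟨h1', h2'⟩; nlinarith
      have hind : (fun x => T.indicator g (x, y)) = (Ioo (-a) a).indicator (fun x => g (x, y)) := by
        funext x
        by_cases hx : (x, y) ∈ T
        · rw [indicator_of_mem hx, indicator_of_mem ((hmem x).1 hx)]
        · rw [indicator_of_notMem hx, indicator_of_notMem (fun h => hx ((hmem x).2 h))]
      rw [hind, integral_indicator measurableSet_Ioo, ← integral_Ioc_eq_integral_Ioo,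
        ← intervalIntegral.integral_of_le (by linarith)]
      -- FTC
      have hpath : ∀ x ∈ uIcc (-a) a,
          HasDerivAt (fun x : ℝ => f (↑x + ↑y * Complex.I)) (g (x, y)) x := by
        intro x hx
        rw [uIcc_of_le (by linarith), mem_Icc] at hx
        have hzmem : (↑x + ↑y * Complex.I) ∈ closedBall (0:ℂ) ε := by
          rw [mem_cball_iff_sq ε hε]; nlinarith [hx.1, hx.2]
        have hcurve : HasDerivAt (fun x : ℝ => (↑x + ↑y * Complex.I : ℂ)) 1 x := by
          simpa using (Complex.ofRealCLM.hasDerivAt (x := x)).add_const (↑y * Complex.I)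
        exact (hd _ (hsub hzmem)).comp_hasDerivAt x hcurve
      have hii : IntervalIntegrable (fun x => g (x, y)) volume (-a) a := by
        apply ContinuousOn.intervalIntegrable
        apply hFc.comp (by fun_prop : Continuous fun x : ℝ => (↑x + ↑y * Complex.I : ℂ)).continuousOn
        intro x hx
        rw [uIcc_of_le (by linarith), mem_Icc] at hx
        apply hsub
        rw [mem_cball_iff_sq ε hε]; nlinarith [hx.1, hx.2]
      rw [intervalIntegral.integral_eq_sub_of_hasDerivAt hpath hii]
      rw [hb _ (by rw [mem_sphere_iff_sq ε hε]; nlinarith),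
        hb _ (by rw [mem_sphere_iff_sq ε hε]; nlinarith)]
      ring
    · have : ∀ x : ℝ, T.indicator g (x, y) = 0 := by
        intro x
        apply indicator_of_notMem
        rw [hT, mem_preimage, he, mem_ball_iff_sq ε hε]
        push_neg
        nlinarith [sq_nonneg x]
      simp [this]
  rw [h1, h2, h3]
  simp [h4]


lemma keyY (ε : ℝ) (hε : 0 < ε) (Ω : Set ℂ) (hsub : closedBall (0:ℂ) ε ⊆ Ω)
    (f : ℂ → ℝ) (F : ℂ → ℂ →L[ℝ] ℝ)
    (hd : ∀ z ∈ Ω, HasFDerivAt f (F z) z)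
    (hFc : ContinuousOn (fun z => F z Complex.I) Ω)
    (hb : ∀ z ∈ sphere (0:ℂ) ε, f z = 0) :
    ∫ z in ball (0:ℂ) ε, F z Complex.I = 0 := by
  have hmp : MeasurePreserving (Complex.measurableEquivRealProd.symm) volume volume :=
    Complex.volume_preserving_equiv_real_prod.symm _
  have hemb := Complex.measurableEquivRealProd.symm.measurableEmbedding
  set e : ℝ × ℝ → ℂ := fun p => ↑p.1 + ↑p.2 * Complex.I with he
  have hfe : ⇑Complex.measurableEquivRealProd.symm = e := by
    funext p
    rw [Complex.measurableEquivRealProd_symm_apply]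
    apply Complex.ext <;> simp [he]
  have hecont : Continuous e := by fun_prop
  set g : ℝ × ℝ → ℝ := fun p => F (e p) Complex.I with hg
  set T : Set (ℝ × ℝ) := e ⁻¹' (ball (0:ℂ) ε) with hT
  have hTmeas : MeasurableSet T := (isOpen_ball.preimage hecont).measurableSet
  have h1 : ∫ z in ball (0:ℂ) ε, F z Complex.I = ∫ p in T, g p := by
    rw [← hmp.setIntegral_preimage_emb hemb (fun z => F z Complex.I) (ball 0 ε), hfe]
  set C : Set (ℝ × ℝ) := e ⁻¹' (closedBall (0:ℂ) ε) with hC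
  have hCeq : C = (fun z : ℂ => (z.re, z.im)) '' (closedBall (0:ℂ) ε) := by
    ext p
    constructor
    · intro hp; exact ⟨e p, hp, by simp [he]⟩
    · rintro ⟨z, hz, rfl⟩
      have : e (z.re, z.im) = z := by apply Complex.ext <;> simp [he]
      simpa [hC, mem_preimage, this] using hz
  have hCcomp : IsCompact C := by
    rw [hCeq]
    exact (isCompact_closedBall _ _).image (by fun_prop)
  have hgint : IntegrableOn g T := by
    apply IntegrableOn.mono_set (t := C)
    · exact ContinuousOn.integrableOn_compact hCcomp
        (hFc.comp hecont.continuousOn (fun p hp => hsub hp))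
    · exact preimage_mono ball_subset_closedBall
  have h2 : ∫ p in T, g p = ∫ p, T.indicator g p := (integral_indicator hTmeas).symm
  have hindint : Integrable (T.indicator g) := (integrable_indicator_iff hTmeas).2 hgint
  have h3 : ∫ p, T.indicator g p = ∫ x : ℝ, (∫ y : ℝ, T.indicator g (x, y)) := by
    rw [show (volume : Measure (ℝ × ℝ)) = (volume : Measure ℝ).prod volume from
      Measure.volume_eq_prod ℝ ℝ]
    exact integral_prod _ (by rwa [← Measure.volume_eq_prod])
  have h4 : ∀ x : ℝ, (∫ y : ℝ, T.indicator g (x, y)) = 0 := by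
    intro x
    by_cases hx : x ^ 2 < ε ^ 2
    · set a : ℝ := Real.sqrt (ε ^ 2 - x ^ 2) with haa
      have ha2 : a ^ 2 = ε ^ 2 - x ^ 2 := Real.sq_sqrt (by linarith)
      have ha : 0 < a := Real.sqrt_pos.2 (by linarith)
      have hmem : ∀ y : ℝ, ((x, y) ∈ T) ↔ y ∈ Ioo (-a) a := by
        intro y
        rw [hT, mem_preimage, he, mem_ball_iff_sq ε hε, mem_Ioo]
        constructor
        · intro h
          constructor <;> nlinarith
        · rintro ⟨h1', h2'⟩; nlinarith
      have hind : (fun y => T.indicator g (x, y)) = (Ioo (-a) a).indicator (fun y => g (x, y)) := by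
        funext y
        by_cases hy : (x, y) ∈ T
        · rw [indicator_of_mem hy, indicator_of_mem ((hmem y).1 hy)]
        · rw [indicator_of_notMem hy, indicator_of_notMem (fun h => hy ((hmem y).2 h))]
      rw [hind, integral_indicator measurableSet_Ioo, ← integral_Ioc_eq_integral_Ioo,
        ← intervalIntegral.integral_of_le (by linarith)]
      have hpath : ∀ y ∈ uIcc (-a) a,
          HasDerivAt (fun y : ℝ => f (↑x + ↑y * Complex.I)) (g (x, y)) y := by
        intro y hy
        rw [uIcc_of_le (by linarith), mem_Icc] at hy
        have hzmem : (↑x + ↑y * Complex.I) ∈ closedBall (0:ℂ) ε := by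
          rw [mem_cball_iff_sq ε hε]; nlinarith [hy.1, hy.2]
        have hcurve : HasDerivAt (fun y : ℝ => (↑x + ↑y * Complex.I : ℂ)) Complex.I y := by
          simpa using ((Complex.ofRealCLM.hasDerivAt (x := y)).mul_const Complex.I).const_add ↑x
        exact (hd _ (hsub hzmem)).comp_hasDerivAt y hcurve
      have hii : IntervalIntegrable (fun y => g (x, y)) volume (-a) a := by
        apply ContinuousOn.intervalIntegrable
        apply hFc.comp (by fun_prop : Continuous fun y : ℝ => (↑x + ↑y * Complex.I : ℂ)).continuousOn
        intro y hy
        rw [uIcc_of_le (by linarith), mem_Icc] at hy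
        apply hsub
        rw [mem_cball_iff_sq ε hε]; nlinarith [hy.1, hy.2]
      rw [intervalIntegral.integral_eq_sub_of_hasDerivAt hpath hii]
      rw [hb _ (by rw [mem_sphere_iff_sq ε hε]; nlinarith),
        hb _ (by rw [mem_sphere_iff_sq ε hε]; nlinarith)]
      ring
    · have : ∀ y : ℝ, T.indicator g (x, y) = 0 := by
        intro y
        apply indicator_of_notMem
        rw [hT, mem_preimage, he, mem_ball_iff_sq ε hε]
        push_neg
        nlinarith [sq_nonneg y]
      simp [this]
  rw [h1, h2, h3]
  simp [h4]


lemma ibp_nonneg (ε : ℝ) (hε : 0 < ε) (Ω : Set ℂ) (hΩ : IsOpen Ω)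
    (hsub : closedBall (0:ℂ) ε ⊆ Ω)
    (v ψ c : ℂ → ℝ) (hv : ContDiffOn ℝ (⊤ : ℕ∞) v Ω)
    (hψd : ∀ z ∈ Ω, HasFDerivAt ψ (c z • fderiv ℝ v z) z)
    (hψc : ContinuousOn ψ Ω) (hcc : ContinuousOn c Ω) (hcle : ∀ z ∈ Ω, c z ≤ 0)
    (hψ0 : ∀ z ∈ sphere (0:ℂ) ε, ψ z = 0) :
    0 ≤ ∫ z in ball (0:ℂ) ε, ψ z * lap v z := by
  set Dv := fderiv ℝ v with hDv
  set D2 := fderiv ℝ Dv with hD2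
  have hDv1 : ContDiffOn ℝ (⊤ : ℕ∞) Dv Ω := hv.fderiv_of_isOpen hΩ (by simp)
  have hDvd : ∀ z ∈ Ω, HasFDerivAt Dv (D2 z) z := by
    intro z hz
    exact ((hDv1.differentiableOn (by simp) z hz).differentiableAt
      (hΩ.mem_nhds hz)).hasFDerivAt
  have hDvc : ContinuousOn Dv Ω := hDv1.continuousOn
  have hD2c : ContinuousOn D2 Ω := hDv1.continuousOn_fderiv_of_isOpen hΩ (by simp)
  -- continuity helpers
  have hvx : ContinuousOn (fun z => Dv z 1) Ω := hDvc.clm_apply continuousOn_const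
  have hvy : ContinuousOn (fun z => Dv z Complex.I) Ω := hDvc.clm_apply continuousOn_const
  have hvxx : ContinuousOn (fun z => D2 z 1 1) Ω :=
    (hD2c.clm_apply continuousOn_const).clm_apply continuousOn_const
  have hvyy : ContinuousOn (fun z => D2 z Complex.I Complex.I) Ω :=
    (hD2c.clm_apply continuousOn_const).clm_apply continuousOn_const
  set e1 : (ℂ →L[ℝ] ℝ) →L[ℝ] ℝ := ContinuousLinearMap.apply ℝ ℝ (1:ℂ) with he1
  set eI : (ℂ →L[ℝ] ℝ) →L[ℝ] ℝ := ContinuousLinearMap.apply ℝ ℝ (Complex.I) with heI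
  -- divergence pieces
  have hX : ∫ z in ball (0:ℂ) ε,
      (ψ z * (D2 z 1 1) + (Dv z 1) * (c z * Dv z 1)) = 0 := by
    have := keyX ε hε Ω hsub (fun w => ψ w * Dv w 1)
      (fun z => ψ z • (e1.comp (D2 z)) + (Dv z 1) • (c z • Dv z))
      (fun z hz => by
        have h1 : HasFDerivAt (fun w => Dv w 1) (e1.comp (D2 z)) z :=
          (e1.hasFDerivAt).comp z (hDvd z hz)
        exact (hψd z hz).mul h1)
      (by
        apply ContinuousOn.congr (f := fun z => ψ z * (D2 z 1 1) + (Dv z 1) * (c z * Dv z 1))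
        · exact (hψc.mul hvxx).add (hvx.mul (hcc.mul hvx))
        · intro z hz
          simp [e1, ContinuousLinearMap.apply_apply])
      (fun z hz => by show ψ z * Dv z 1 = 0; rw [hψ0 z hz, zero_mul])
    rw [← this]
    apply setIntegral_congr_fun measurableSet_ball
    intro z hz
    simp [e1, ContinuousLinearMap.apply_apply]
  have hY : ∫ z in ball (0:ℂ) ε,
      (ψ z * (D2 z Complex.I Complex.I) + (Dv z Complex.I) * (c z * Dv z Complex.I)) = 0 := by
    have := keyY ε hε Ω hsub (fun w => ψ w * Dv w Complex.I)
      (fun z => ψ z • (eI.comp (D2 z)) + (Dv z Complex.I) • (c z • Dv z))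
      (fun z hz => by
        have h1 : HasFDerivAt (fun w => Dv w Complex.I) (eI.comp (D2 z)) z :=
          (eI.hasFDerivAt).comp z (hDvd z hz)
        exact (hψd z hz).mul h1)
      (by
        apply ContinuousOn.congr
          (f := fun z => ψ z * (D2 z Complex.I Complex.I) + (Dv z Complex.I) * (c z * Dv z Complex.I))
        · exact (hψc.mul hvyy).add (hvy.mul (hcc.mul hvy))
        · intro z hz
          simp [eI, ContinuousLinearMap.apply_apply])
      (fun z hz => by show ψ z * Dv z Complex.I = 0; rw [hψ0 z hz, zero_mul])
    rw [← this]
    apply setIntegral_congr_fun measurableSet_ball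
    intro z hz
    simp [eI, ContinuousLinearMap.apply_apply]
  -- the three integrands
  set A : ℂ → ℝ := fun z => ψ z * (D2 z 1 1) + (Dv z 1) * (c z * Dv z 1) with hA
  set B : ℂ → ℝ := fun z => ψ z * (D2 z Complex.I Complex.I)
    + (Dv z Complex.I) * (c z * Dv z Complex.I) with hB
  set N : ℂ → ℝ := fun z => (-c z) * ((Dv z 1)^2 + (Dv z Complex.I)^2) with hN
  have hAc : ContinuousOn A Ω := (hψc.mul hvxx).add (hvx.mul (hcc.mul hvx))
  have hBc : ContinuousOn B Ω := (hψc.mul hvyy).add (hvy.mul (hcc.mul hvy))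
  have hNc : ContinuousOn N Ω := (hcc.neg.mul ((hvx.pow 2).add (hvy.pow 2)))
  have hint : ∀ {f : ℂ → ℝ}, ContinuousOn f Ω → IntegrableOn f (ball (0:ℂ) ε) := by
    intro f hf
    exact ((hf.mono hsub).integrableOn_compact (isCompact_closedBall _ _)).mono_set
      ball_subset_closedBall
  -- pointwise identity on Ω
  have hlap : ∀ z ∈ ball (0:ℂ) ε, ψ z * lap v z = A z + B z + N z := by
    intro z hz
    have : lap v z = D2 z 1 1 + D2 z Complex.I Complex.I := by
      rw [lap, iteratedFDeriv_two_apply, iteratedFDeriv_two_apply]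
      simp [hD2, hDv]
    rw [this, hA, hB, hN]
    ring
  rw [setIntegral_congr_fun measurableSet_ball hlap]
  rw [integral_add (f := fun x => A x + B x) (hint (hAc.add hBc)) (hint hNc),
    integral_add (hint hAc) (hint hBc), hX, hY]
  simp only [zero_add]
  apply setIntegral_nonneg measurableSet_ball
  intro z hz
  have hc0 := hcle z (hsub (ball_subset_closedBall hz))
  have : (0:ℝ) ≤ (Dv z 1)^2 + (Dv z Complex.I)^2 := by positivity
  simp only [hN]
  nlinarith


lemma phi_deriv_zero (φ : ℝ → ℝ) (hφ : ContDiff ℝ (⊤ : ℕ∞) φ) (hφ2 : ∀ s : ℝ, s ≤ -1 → φ s = 0) :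
    ∀ s : ℝ, s ≤ -1 → deriv φ s = 0 := by
  have hlt : ∀ s : ℝ, s < -1 → deriv φ s = 0 := by
    intro s hs
    have h : φ =ᶠ[nhds s] (fun _ => (0:ℝ)) :=
      Filter.eventuallyEq_of_mem (Iio_mem_nhds hs) (fun x hx => hφ2 x (le_of_lt hx))
    rw [h.deriv_eq, deriv_const]
  intro s hs
  rcases lt_or_eq_of_le hs with h | h
  · exact hlt s h
  · have hc : ContinuousAt (deriv φ) s := (hφ.continuous_deriv (by simp)).continuousAt
    have h1 : Filter.Tendsto (deriv φ) (nhdsWithin s (Iio s)) (nhds (deriv φ s)) :=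
      hc.continuousWithinAt.tendsto
    have h2 : Filter.Tendsto (deriv φ) (nhdsWithin s (Iio s)) (nhds 0) := by
      apply Filter.Tendsto.congr' _ tendsto_const_nhds
      filter_upwards [self_mem_nhdsWithin] with x hx
      exact (hlt x (by rw [h] at hx; exact hx)).symm
    exact tendsto_nhds_unique h1 h2

lemma phi_cd (φ : ℝ → ℝ) (hφ : ContDiff ℝ (⊤ : ℕ∞) φ) : ContDiff ℝ ∞ (deriv φ) :=
  (contDiff_infty_iff_deriv.mp (hφ.of_le (by simp))).2

lemma phi_deriv_nonneg (φ : ℝ → ℝ) (hφ : ContDiff ℝ (⊤ : ℕ∞) φ) (hφ2 : ∀ s : ℝ, s ≤ -1 → φ s = 0)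
    (hφcvx : ∀ s : ℝ, 0 ≤ deriv (deriv φ) s) : ∀ s : ℝ, 0 ≤ deriv φ s := by
  have hmono : Monotone (deriv φ) :=
    monotone_of_deriv_nonneg ((phi_cd φ hφ).differentiable (by norm_num)) hφcvx
  intro s
  rcases le_or_gt s (-1) with h | h
  · rw [phi_deriv_zero φ hφ hφ2 s h]
  · calc (0:ℝ) = deriv φ (-1) := (phi_deriv_zero φ hφ hφ2 (-1) le_rfl).symm
      _ ≤ deriv φ s := hmono h.le


/-- if `u` solves `∂u/∂t = e^{-2u}Δu` on a neighbourhood of `D̄_ε × (0,t₀)`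
with `u ≥ M+1` on `∂D_ε × (0,t₀)`, and `φ` is smooth and convex with `φ(s)=s` for `s ≥ 1`
and `φ(s)=0` for `s ≤ -1`, then `t ↦ ∫_{D_ε} φ(M - u(·,t))` is nonincreasing on `(0,t₀)`. -/
theorem stmt14 (ε : ℝ) (hε : 0 < ε) (M t₀ : ℝ) (ht₀ : 0 < t₀)
    (u : ℂ → ℝ → ℝ) (U : Set (ℂ × ℝ)) (hU : IsOpen U)
    (hUsub : closedBall (0:ℂ) ε ×ˢ Ioo (0:ℝ) t₀ ⊆ U)
    (hu : ContDiffOn ℝ (⊤ : ℕ∞) (fun p : ℂ × ℝ => u p.1 p.2) U)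
    (heq : ∀ z ∈ closedBall (0:ℂ) ε, ∀ t ∈ Ioo (0:ℝ) t₀,
      HasDerivAt (u z) (Real.exp (-2 * u z t) * lap (fun w => u w t) z) t)
    (hbdry : ∀ z ∈ sphere (0:ℂ) ε, ∀ t ∈ Ioo (0:ℝ) t₀, M + 1 ≤ u z t)
    (φ : ℝ → ℝ) (hφ : ContDiff ℝ (⊤ : ℕ∞) φ)
    (hφ1 : ∀ s : ℝ, 1 ≤ s → φ s = s) (hφ2 : ∀ s : ℝ, s ≤ -1 → φ s = 0)
    (hφcvx : ∀ s : ℝ, 0 ≤ deriv (deriv φ) s) :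
    AntitoneOn (fun t => ∫ z in ball (0:ℂ) ε, φ (M - u z t)) (Ioo 0 t₀) := by
  have hφd := phi_cd φ hφ
  have hd0 := phi_deriv_zero φ hφ hφ2
  have hd0' := phi_deriv_nonneg φ hφ hφ2 hφcvx
  set ut : ℂ × ℝ → ℝ := fun p => u p.1 p.2 with hut
  have hucont : ContinuousOn ut U := hu.continuousOn
  have hfc : ContinuousOn (fderiv ℝ ut) U := hu.continuousOn_fderiv_of_isOpen hU (by simp)
  have hw : ∀ z t, (z, t) ∈ U →
      HasDerivAt (u z) (fderiv ℝ ut (z, t) ((0:ℂ), (1:ℝ))) t := by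
    intro z t hmem
    have hder : HasFDerivAt ut (fderiv ℝ ut (z, t)) (z, t) :=
      ((hu.differentiableOn (by simp) _ hmem).differentiableAt (hU.mem_nhds hmem)).hasFDerivAt
    have hγ : HasDerivAt (fun s : ℝ => ((z : ℂ), s)) ((0 : ℂ), (1 : ℝ)) t :=
      (hasDerivAt_const t z).prodMk (hasDerivAt_id t)
    exact hder.comp_hasDerivAt t hγ
  -- the main derivative fact
  have main : ∀ t₁ ∈ Ioo (0:ℝ) t₀, ∃ G : ℝ, G ≤ 0 ∧
      HasDerivAt (fun t => ∫ z in ball (0:ℂ) ε, φ (M - u z t)) G t₁ := by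
    intro t₁ ht₁
    obtain ⟨ht₁0, ht₁t⟩ := ht₁
    have hmin : 0 < min t₁ (t₀ - t₁) := lt_min ht₁0 (by linarith)
    set δ : ℝ := min t₁ (t₀ - t₁) / 2 with hδdef
    have hδ : 0 < δ := by positivity
    have hδ1 : δ ≤ t₁ / 2 := by
      rw [hδdef]; have := min_le_left t₁ (t₀ - t₁); linarith
    have hδ2 : δ ≤ (t₀ - t₁) / 2 := by
      rw [hδdef]; have := min_le_right t₁ (t₀ - t₁); linarith
    have hIcc : Icc (t₁ - δ) (t₁ + δ) ⊆ Ioo 0 t₀ := by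
      intro x hx
      rw [mem_Icc] at hx
      exact ⟨by linarith [hx.1], by linarith [hx.2]⟩
    have hSU : (closedBall (0:ℂ) ε) ×ˢ (Icc (t₁ - δ) (t₁ + δ)) ⊆ U := by
      intro p hp
      exact hUsub ⟨hp.1, hIcc hp.2⟩
    -- bound
    obtain ⟨C, hC⟩ : ∃ C, ∀ p ∈ (closedBall (0:ℂ) ε) ×ˢ (Icc (t₁ - δ) (t₁ + δ)),
        ‖deriv φ (M - ut p) * (fderiv ℝ ut p ((0:ℂ), (1:ℝ)))‖ ≤ C := by
      apply IsCompact.exists_bound_of_continuousOn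
        ((isCompact_closedBall _ _).prod isCompact_Icc)
      exact (((hφ.continuous_deriv (by simp)).comp_continuousOn
        (continuousOn_const.sub (hucont.mono hSU)))).mul
        (((hfc.mono hSU)).clm_apply continuousOn_const)
    have key := hasDerivAt_integral_of_dominated_loc_of_deriv_le
      (μ := volume.restrict (ball (0:ℂ) ε)) (x₀ := t₁)
      (F := fun x z => φ (M - u z x))
      (F' := fun x z => deriv φ (M - u z x) * (-(fderiv ℝ ut (z, x) ((0:ℂ), (1:ℝ)))))
      (bound := fun _ => C) (Metric.ball_mem_nhds t₁ hδ)
      (by -- measurability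
        filter_upwards [isOpen_Ioo.mem_nhds (⟨ht₁0, ht₁t⟩ : t₁ ∈ Ioo 0 t₀)] with x hx
        apply ContinuousOn.aestronglyMeasurable _ measurableSet_ball
        have hcz : ContinuousOn (fun z => u z x) (ball (0:ℂ) ε) :=
          hucont.comp (f := fun z : ℂ => (z, x))
            (Continuous.continuousOn (by fun_prop))
            (fun z hz => hUsub ⟨ball_subset_closedBall hz, hx⟩)
        exact hφ.continuous.comp_continuousOn (continuousOn_const.sub hcz))
      (by -- integrability at t₁
        have hcz : ContinuousOn (fun z => φ (M - u z t₁)) (closedBall (0:ℂ) ε) := by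
          apply hφ.continuous.comp_continuousOn
          apply continuousOn_const.sub
          exact hucont.comp (f := fun z : ℂ => (z, t₁))
            (Continuous.continuousOn (by fun_prop))
            (fun z hz => hUsub ⟨hz, ⟨ht₁0, ht₁t⟩⟩)
        exact (hcz.integrableOn_compact (isCompact_closedBall _ _)).mono_set
          ball_subset_closedBall)
      (by -- measurability of F' t₁
        apply ContinuousOn.aestronglyMeasurable _ measurableSet_ball
        have hz1 : ContinuousOn (fun z => u z t₁) (ball (0:ℂ) ε) :=
          hucont.comp (f := fun z : ℂ => (z, t₁)) (Continuous.continuousOn (by fun_prop))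
            (fun z hz => hUsub ⟨ball_subset_closedBall hz, ⟨ht₁0, ht₁t⟩⟩)
        have hz2 : ContinuousOn (fun z : ℂ => fderiv ℝ ut (z, t₁)) (ball (0:ℂ) ε) :=
          hfc.comp (f := fun z : ℂ => (z, t₁)) (Continuous.continuousOn (by fun_prop))
            (fun z hz => hUsub ⟨ball_subset_closedBall hz, ⟨ht₁0, ht₁t⟩⟩)
        exact ((hφ.continuous_deriv (by simp)).comp_continuousOn
          (continuousOn_const.sub hz1)).mul ((hz2.clm_apply continuousOn_const).neg))
      (by -- bound
        filter_upwards [ae_restrict_mem measurableSet_ball] with z hz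
        intro x hx
        have hxI : x ∈ Icc (t₁ - δ) (t₁ + δ) := by
          rw [Real.ball_eq_Ioo] at hx
          exact Ioo_subset_Icc_self hx
        have := hC (z, x) ⟨ball_subset_closedBall hz, hxI⟩
        calc ‖deriv φ (M - u z x) * (-(fderiv ℝ ut (z, x) ((0:ℂ), (1:ℝ))))‖
            = ‖deriv φ (M - ut (z, x)) * (fderiv ℝ ut (z, x) ((0:ℂ), (1:ℝ)))‖ := by
              rw [mul_neg, norm_neg]
          _ ≤ C := this)
      ((integrableOn_const measure_ball_lt_top.ne))
      (by -- differentiability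
        filter_upwards [ae_restrict_mem measurableSet_ball] with z hz
        intro x hx
        have hxI : x ∈ Icc (t₁ - δ) (t₁ + δ) := by
          rw [Real.ball_eq_Ioo] at hx
          exact Ioo_subset_Icc_self hx
        have hmemU : (z, x) ∈ U := hUsub ⟨ball_subset_closedBall hz, hIcc hxI⟩
        have h1 := hw z x hmemU
        have h2 : HasDerivAt (fun s => M - u z s)
            (-(fderiv ℝ ut (z, x) ((0:ℂ), (1:ℝ)))) x := h1.const_sub M
        have h3 : HasDerivAt φ (deriv φ (M - u z x)) (M - u z x) :=
          ((hφ.differentiable (by simp)) _).hasDerivAt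
        exact h3.comp x h2)
    obtain ⟨-, hder⟩ := key
    refine ⟨_, ?_, hder⟩
    -- sign of the derivative
    set v : ℂ → ℝ := fun z => u z t₁ with hv0
    set Ω : Set ℂ := {z : ℂ | (z, t₁) ∈ U} with hΩ0
    have hΩ : IsOpen Ω := hU.preimage (by fun_prop : Continuous fun z : ℂ => (z, t₁))
    have hsubΩ : closedBall (0:ℂ) ε ⊆ Ω := fun z hz => hUsub ⟨hz, ⟨ht₁0, ht₁t⟩⟩
    have hvCD : ContDiffOn ℝ (⊤ : ℕ∞) v Ω := by
      apply hu.comp (f := fun z : ℂ => (z, t₁)) (contDiff_id.prodMk contDiff_const).contDiffOn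
      exact fun z hz => hz
    have hvc : ContinuousOn v Ω := hvCD.continuousOn
    set ψ : ℂ → ℝ := fun z => deriv φ (M - v z) * Real.exp (-2 * v z) with hψ0'
    set c : ℂ → ℝ := fun z =>
      -(deriv (deriv φ) (M - v z) + 2 * deriv φ (M - v z)) * Real.exp (-2 * v z) with hc0
    have hψd : ∀ z ∈ Ω, HasFDerivAt ψ (c z • fderiv ℝ v z) z := by
      intro z hz
      have hvz : HasFDerivAt v (fderiv ℝ v z) z :=
        ((hvCD.differentiableOn (by simp) z hz).differentiableAt (hΩ.mem_nhds hz)).hasFDerivAt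
      set L := fderiv ℝ v z with hL
      have hg : HasFDerivAt (fun w => M - v w) (-L) z := hvz.const_sub M
      have hφ' : HasDerivAt (deriv φ) (deriv (deriv φ) (M - v z)) (M - v z) :=
        ((hφd.differentiable (by norm_num)) _).hasDerivAt
      have hA : HasFDerivAt (fun w => deriv φ (M - v w))
          (deriv (deriv φ) (M - v z) • (-L)) z := by
        have := hφ'.comp_hasFDerivAt z hg; exact this
      have hh : HasFDerivAt (fun w => -2 * v w) ((-2:ℝ) • L) z := hvz.const_mul (-2)
      have hB : HasFDerivAt (fun w => Real.exp (-2 * v w))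
          (Real.exp (-2 * v z) • ((-2:ℝ) • L)) z := (Real.hasDerivAt_exp _).comp_hasFDerivAt z hh
      have : HasFDerivAt (fun w => deriv φ (M - v w) * Real.exp (-2 * v w)) _ z := hA.mul hB
      convert this using 1
      · rfl
      simp only [hc0]
      module
    have hψc : ContinuousOn ψ Ω :=
      ((hφ.continuous_deriv (by simp)).comp_continuousOn (continuousOn_const.sub hvc)).mul
        (Real.continuous_exp.comp_continuousOn (continuousOn_const.mul hvc))
    have hcc : ContinuousOn c Ω := by
      apply ContinuousOn.mul _ (Real.continuous_exp.comp_continuousOn (continuousOn_const.mul hvc))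
      apply ContinuousOn.neg
      apply ContinuousOn.add
      · exact (hφd.continuous_deriv (by norm_num)).comp_continuousOn (continuousOn_const.sub hvc)
      · exact continuousOn_const.mul
          ((hφ.continuous_deriv (by simp)).comp_continuousOn (continuousOn_const.sub hvc))
    have hcle : ∀ z ∈ Ω, c z ≤ 0 := by
      intro z hz
      have h1 := hφcvx (M - v z)
      have h2 := hd0' (M - v z)
      have h3 := Real.exp_pos (-2 * v z)
      simp only [hc0]
      nlinarith
    have hψ00 : ∀ z ∈ sphere (0:ℂ) ε, ψ z = 0 := by
      intro z hz
      have := hbdry z hz t₁ ⟨ht₁0, ht₁t⟩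
      show deriv φ (M - v z) * Real.exp (-2 * v z) = 0
      rw [hd0 (M - v z) (by show M - u z t₁ ≤ -1; linarith), zero_mul]
    have hibp := ibp_nonneg ε hε Ω hΩ hsubΩ v ψ c hvCD hψd hψc hcc hcle hψ00
    have heqint : (∫ z in ball (0:ℂ) ε,
        deriv φ (M - u z t₁) * (-(fderiv ℝ ut (z, t₁) ((0:ℂ), (1:ℝ))))) =
        - ∫ z in ball (0:ℂ) ε, ψ z * lap v z := by
      rw [← integral_neg]
      apply setIntegral_congr_fun measurableSet_ball
      intro z hz
      have hzK : z ∈ closedBall (0:ℂ) ε := ball_subset_closedBall hz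
      have huniq : fderiv ℝ ut (z, t₁) ((0:ℂ), (1:ℝ)) = Real.exp (-2 * u z t₁) * lap v z :=
        (hw z t₁ (hUsub ⟨hzK, ⟨ht₁0, ht₁t⟩⟩)).unique (heq z hzK t₁ ⟨ht₁0, ht₁t⟩)
      show deriv φ (M - u z t₁) * (-(fderiv ℝ ut (z, t₁) ((0:ℂ), (1:ℝ)))) = -(ψ z * lap v z)
      simp only [hψ0', hv0] at huniq ⊢
      rw [huniq]
      ring
    show (∫ z in ball (0:ℂ) ε,
      deriv φ (M - u z t₁) * (-(fderiv ℝ ut (z, t₁) ((0:ℂ), (1:ℝ))))) ≤ 0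
    rw [heqint]
    linarith
  -- conclude
  apply antitoneOn_of_deriv_nonpos (convex_Ioo 0 t₀)
  · intro t ht
    exact ((main t ht).choose_spec.2).continuousAt.continuousWithinAt
  · rw [interior_Ioo]
    intro t ht
    exact ((main t ht).choose_spec.2).differentiableAt.differentiableWithinAt
  · rw [interior_Ioo]
    intro t ht
    rw [((main t ht).choose_spec.2).deriv]
    exact (main t ht).choose_spec.1
end

section
/- Let β ≥ 1 and t ∈ (0,1), and let f : (0,1/2] → ℝ be a measurable function satisfying f(r) ≤ β/t for all r ∈ (0, e^{−β/t}] and f(r) ≤ −ln( r·(−ln r) ) + (1/2)ln 3 for all r ∈ (0,1/2]. Then ∫₀^{1/2} e^{f(r)} dr ≤ 1 + √3·( ln(β/t) − ln(ln 2) ). Consequently, for all sufficiently small t > 0 (depending only on β), ∫₀^{1/2} e^{f(r)} dr ≤ −2 ln t. -/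
/-!
Split `(0, 1/2]` at `a = e^{-β/t}`. On `(0, a]` the integrand is at most `e^{β/t}`, so that piece
contributes at most `a e^{β/t} = 1`. On `(a, 1/2]` the cusp bound gives `e^f ≤ √3 / (r (-ln r))`,
whose integral is `√3 (ln(-ln a) - ln(ln 2)) = √3 (ln(β/t) - ln(ln 2))` because `-ln(-ln r)` is a
primitive of `1 / (r (-ln r))`. As `t → 0` the right-hand side grows like `√3 (-ln t)`, and `√3 < 2`.
-/

open Set MeasureTheory Real

theorem hasDerivAt_log_neg_log {x : ℝ} (hx : x ≠ 0) (hlog : log x ≠ 0) :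
    HasDerivAt (fun r => log (-log r)) (x * log x)⁻¹ x :=
  (((hasDerivAt_log hx).neg).log (neg_ne_zero.2 hlog)).congr_deriv
    (by rw [Pi.neg_apply]; field_simp)

theorem continuousOn_inv_mul_neg_log : ContinuousOn (fun r => (r * -log r)⁻¹) (Ioo 0 1) := by
  refine (continuousOn_id.mul (continuousOn_log.mono fun x hx => ?_).neg).inv₀ fun x hx => ?_
  · exact hx.1.ne'
  · exact (mul_pos hx.1 (neg_pos.2 (log_neg hx.1 hx.2))).ne'

theorem integral_inv_mul_neg_log {a b : ℝ} (ha : a ∈ Ioo 0 1) (hb : b ∈ Ioo 0 1) :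
    ∫ r in a..b, (r * -log r)⁻¹ = log (-log a) - log (-log b) := by
  have hsub : uIcc a b ⊆ Ioo 0 1 := ordConnected_Ioo.uIcc_subset ha hb
  rw [← neg_sub_neg]
  refine intervalIntegral.integral_eq_sub_of_hasDerivAt (f := fun r => -log (-log r))
    (fun x hx => ?_) (continuousOn_inv_mul_neg_log.mono hsub).intervalIntegrable
  obtain ⟨hx0, hx1⟩ := hsub hx
  exact (hasDerivAt_log_neg_log hx0.ne' (log_neg hx0 hx1).ne).neg.congr_deriv
    (by rw [mul_neg, inv_neg])

theorem exp_neg_log_add_half_log_three {x : ℝ} (hx : 0 < x) :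
    exp (-log x + 1 / 2 * log 3) = √3 * x⁻¹ := by
  rw [exp_add, exp_neg, exp_log hx, sqrt_eq_rpow, rpow_def_of_pos (by norm_num : (0:ℝ) < 3)]
  ring_nf

theorem setLIntegral_Ioc_ofReal_exp_le_of_cusp_bound {f : ℝ → ℝ} {a b : ℝ} (ha : 0 < a)
    (hab : a ≤ b) (hb : b < 1)
    (hf : ∀ r ∈ Ioc a b, f r ≤ -log (r * -log r) + 1 / 2 * log 3) :
    ∫⁻ r in Ioc a b, ENNReal.ofReal (exp (f r)) ≤
      ENNReal.ofReal (√3 * (log (-log a) - log (-log b))) := by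
  have hsub : Icc a b ⊆ Ioo 0 1 := fun r hr => ⟨ha.trans_le hr.1, hr.2.trans_lt hb⟩
  have hint : IntegrableOn (fun r => √3 * (r * -log r)⁻¹) (Ioc a b) :=
    ((continuousOn_inv_mul_neg_log.mono hsub).const_smul (√3)).integrableOn_Icc.mono_set
      Ioc_subset_Icc_self
  have hpos : ∀ r ∈ Ioc a b, 0 < r * -log r := fun r hr => by
    obtain ⟨hr0, hr1⟩ := hsub (Ioc_subset_Icc_self hr)
    exact mul_pos hr0 (neg_pos.2 (log_neg hr0 hr1))
  calc ∫⁻ r in Ioc a b, ENNReal.ofReal (exp (f r))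
      ≤ ∫⁻ r in Ioc a b, ENNReal.ofReal (√3 * (r * -log r)⁻¹) := by
        refine setLIntegral_mono (by fun_prop) fun r hr => ENNReal.ofReal_le_ofReal ?_
        rw [← exp_neg_log_add_half_log_three (hpos r hr)]
        exact exp_le_exp.2 (hf r hr)
    _ = ENNReal.ofReal (∫ r in Ioc a b, √3 * (r * -log r)⁻¹) := by
        refine (ofReal_integral_eq_lintegral_ofReal hint ?_).symm
        filter_upwards [self_mem_ae_restrict measurableSet_Ioc] with r hr
        exact mul_nonneg (sqrt_nonneg 3) (inv_nonneg.2 (hpos r hr).le)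
    _ = ENNReal.ofReal (√3 * (log (-log a) - log (-log b))) := by
        rw [← intervalIntegral.integral_of_le hab, intervalIntegral.integral_const_mul,
          integral_inv_mul_neg_log ⟨ha, by linarith⟩ ⟨by linarith, hb⟩]

theorem setLIntegral_ofReal_exp_le_of_bounds {f : ℝ → ℝ} {L : ℝ} (hL : log 2 ≤ L)
    (h_near : ∀ r ∈ Ioc 0 (exp (-L)), f r ≤ L)
    (h_cusp : ∀ r ∈ Ioc (0:ℝ) (1 / 2), f r ≤ -log (r * -log r) + 1 / 2 * log 3) :
    ∫⁻ r in Ioc (0:ℝ) (1 / 2), ENNReal.ofReal (exp (f r)) ≤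
      ENNReal.ofReal (1 + √3 * (log L - log (log 2))) := by
  set a := exp (-L)
  have ha : 0 < a := exp_pos _
  have ha_half : a ≤ 1 / 2 := by
    rw [one_div, ← exp_log (by norm_num : (0:ℝ) < 2), ← exp_neg]
    exact exp_le_exp.2 (neg_le_neg hL)
  have h_inner : ∫⁻ r in Ioc 0 a, ENNReal.ofReal (exp (f r)) ≤ 1 :=
    calc ∫⁻ r in Ioc 0 a, ENNReal.ofReal (exp (f r))
        ≤ ∫⁻ _ in Ioc 0 a, ENNReal.ofReal (exp L) :=
          setLIntegral_mono measurable_const fun r hr =>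
            ENNReal.ofReal_le_ofReal (exp_le_exp.2 (h_near r hr))
      _ = 1 := by
          rw [setLIntegral_const, volume_Ioc, sub_zero, ← ENNReal.ofReal_mul (exp_pos L).le,
            ← exp_add, add_neg_cancel, exp_zero, ENNReal.ofReal_one]
  have h_outer : ∫⁻ r in Ioc a (1 / 2), ENNReal.ofReal (exp (f r)) ≤
      ENNReal.ofReal (√3 * (log L - log (log 2))) := by
    have := setLIntegral_Ioc_ofReal_exp_le_of_cusp_bound ha ha_half (by norm_num)
      fun r hr => h_cusp r ⟨ha.trans hr.1, hr.2⟩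
    rwa [log_exp, neg_neg, one_div, log_inv, neg_neg, ← one_div] at this
  have h_nonneg : 0 ≤ √3 * (log L - log (log 2)) :=
    mul_nonneg (sqrt_nonneg 3) (sub_nonneg.2 (log_le_log (log_pos one_lt_two) hL))
  rw [← Ioc_union_Ioc_eq_Ioc ha.le ha_half, ENNReal.ofReal_add zero_le_one h_nonneg,
    ENNReal.ofReal_one]
  exact (lintegral_union_le _ _ _).trans (add_le_add h_inner h_outer)

theorem exists_const_add_sqrt_three_mul_log_div_le_neg_two_mul_log {β : ℝ} (hβ : 0 < β)
    (C : ℝ) : ∃ t₁ > 0, ∀ t ∈ Ioo 0 t₁, C + √3 * log (β / t) ≤ -2 * log t := by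
  have h_gap : 0 < 2 - √3 := by
    have : √3 < √4 := sqrt_lt_sqrt (by norm_num) (by norm_num)
    rw [show (4:ℝ) = 2 ^ 2 by norm_num, sqrt_sq zero_le_two] at this
    linarith
  set K := C + √3 * log β
  refine ⟨exp (-K / (2 - √3)), exp_pos _, fun t ht => ?_⟩
  have hlog_t : log t < -K / (2 - √3) := (log_lt_iff_lt_exp ht.1).2 ht.2
  rw [lt_div_iff₀ h_gap] at hlog_t
  rw [log_div hβ.ne' ht.1.ne']
  linarith

/-- radial length estimate: let `β ≥ 1`. For any `t ∈ (0,1)` and any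
measurable `f` on `(0,1/2]` with `f(r) ≤ β/t` for `r ∈ (0, e^{-β/t}]` and
`f(r) ≤ -ln(r·(-ln r)) + ½ ln 3` for `r ∈ (0,1/2]`, one has
`∫₀^{1/2} e^{f} ≤ 1 + √3 (ln(β/t) - ln(ln 2))`; consequently, for all sufficiently
small `t > 0` (depending only on `β`), `∫₀^{1/2} e^{f} ≤ -2 ln t`. -/
theorem stmt16 (β : ℝ) (hβ : 1 ≤ β) :
    (∀ t ∈ Ioo (0:ℝ) 1, ∀ f : ℝ → ℝ, Measurable f →
      (∀ r ∈ Ioc (0:ℝ) (Real.exp (-β/t)), f r ≤ β/t) →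
      (∀ r ∈ Ioc (0:ℝ) (1/2), f r ≤ -Real.log (r * (-Real.log r)) + (1/2) * Real.log 3) →
      ∫⁻ r in Ioc (0:ℝ) (1/2), ENNReal.ofReal (Real.exp (f r)) ≤
        ENNReal.ofReal (1 + Real.sqrt 3 * (Real.log (β/t) - Real.log (Real.log 2)))) ∧
    ∃ t₁ : ℝ, 0 < t₁ ∧ ∀ t ∈ Ioo (0:ℝ) t₁, ∀ f : ℝ → ℝ, Measurable f →
      (∀ r ∈ Ioc (0:ℝ) (Real.exp (-β/t)), f r ≤ β/t) →
      (∀ r ∈ Ioc (0:ℝ) (1/2), f r ≤ -Real.log (r * (-Real.log r)) + (1/2) * Real.log 3) →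
      ∫⁻ r in Ioc (0:ℝ) (1/2), ENNReal.ofReal (Real.exp (f r)) ≤
        ENNReal.ofReal (-2 * Real.log t) := by
  have bound : ∀ t ∈ Ioo (0:ℝ) 1, ∀ f : ℝ → ℝ,
      (∀ r ∈ Ioc (0:ℝ) (exp (-β / t)), f r ≤ β / t) →
      (∀ r ∈ Ioc (0:ℝ) (1 / 2), f r ≤ -log (r * -log r) + 1 / 2 * log 3) →
      ∫⁻ r in Ioc (0:ℝ) (1 / 2), ENNReal.ofReal (exp (f r)) ≤
        ENNReal.ofReal (1 + √3 * (log (β / t) - log (log 2))) := by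
    intro t ht f h_near h_cusp
    have hL : log 2 ≤ β / t :=
      (log_two_lt_d9.le.trans (by norm_num : (0.6931471808 : ℝ) ≤ 1)).trans
        ((one_le_div₀ ht.1).2 (by linarith [ht.2]))
    exact setLIntegral_ofReal_exp_le_of_bounds hL (by simpa only [neg_div] using h_near) h_cusp
  refine ⟨fun t ht f _ => bound t ht f, ?_⟩
  obtain ⟨t₁, ht₁, h_log⟩ :=
    exists_const_add_sqrt_three_mul_log_div_le_neg_two_mul_log (by linarith : 0 < β)
      (1 - √3 * log (log 2))
  refine ⟨min t₁ 1, lt_min ht₁ one_pos, fun t ht f _ h_near h_cusp => ?_⟩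
  refine (bound t ⟨ht.1, ht.2.trans_le (min_le_right _ _)⟩ f h_near h_cusp).trans
    (ENNReal.ofReal_le_ofReal ?_)
  linarith [h_log t ⟨ht.1, ht.2.trans_le (min_le_left _ _)⟩]
end
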